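/- arXiv:2104.11771 — 6 statements merged into one kernel-verified Lean document; each statement's English description precedes it below -/
import Mathlib

section
/- Let (Z,d) be a finite metric space, let (a_i)_{i≥0} be a sequence of positive reals with a_{i+1} ≤ a_i/2 for all i ≥ 0, and let s ∈ Z. Then there exists a subset Z' ⊂ Z containing s such that: (i) any two distinct points x,y ∈ Z' satisfy d(x,y) > a_{|Z'|-1}; (ii) there is a retraction R : Z → Z' (R restricted to Z' is the identity) with d(R(x),x) ≤ a_{|Z'|} for all x ∈ Z. Moreover, the retraction R is uniquely determined by Z'. -/
private lemma cluster_aux {α : Type*} [MetricSpace α] [Fintype α]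
    (a : ℕ → ℝ) (hpos : ∀ i, 0 < a i) (hhalf : ∀ i, a (i + 1) ≤ a i / 2) (s : α) :
    ∀ n (Z : Finset α), Fintype.card α - Z.card ≤ n → s ∈ Z →
      (∀ x ∈ Z, ∀ y ∈ Z, x ≠ y → a (Z.card - 1) < dist x y) →
      ∃ Z' : Finset α, s ∈ Z' ∧
        (∀ x ∈ Z', ∀ y ∈ Z', x ≠ y → a (Z'.card - 1) < dist x y) ∧
        ∀ x, ∃ y ∈ Z', dist y x ≤ a Z'.card := by
  classical
  intro n
  induction n with
  | zero =>
    intro Z hle hs hsep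
    have hZ : Z = Finset.univ := Finset.eq_univ_of_card Z
      (le_antisymm (Finset.card_le_univ Z) (Nat.le_of_sub_eq_zero (Nat.le_zero.mp hle)))
    exact ⟨Z, hs, hsep, fun x => ⟨x, by simp [hZ], by simp [le_of_lt (hpos _)]⟩⟩
  | succ n ih =>
    intro Z hle hs hsep
    by_cases hcov : ∀ x, ∃ y ∈ Z, dist y x ≤ a Z.card
    · exact ⟨Z, hs, hsep, hcov⟩
    · push_neg at hcov
      obtain ⟨x, hx⟩ := hcov
      have hxZ : x ∉ Z := fun h => absurd (hx x h) (by simp [le_of_lt (hpos _)])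
      have hcard : (insert x Z).card = Z.card + 1 := Finset.card_insert_of_notMem hxZ
      have hcardpos : 1 ≤ Z.card := Finset.card_pos.mpr ⟨s, hs⟩ 
      have hkey : a Z.card < a (Z.card - 1) := by
        have := hhalf (Z.card - 1)
        rw [Nat.sub_add_cancel hcardpos] at this
        linarith [hpos (Z.card - 1)]
      have hsep' : ∀ u ∈ insert x Z, ∀ v ∈ insert x Z, u ≠ v →
          a ((insert x Z).card - 1) < dist u v := by
        intro u hu v hv huv
        rw [hcard]
        simp only [Nat.add_sub_cancel]
        rcases Finset.mem_insert.mp hu with hux | huZ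
        · rcases Finset.mem_insert.mp hv with hvx | hvZ
          · exact absurd (hux.trans hvx.symm) huv
          · rw [hux, dist_comm]; exact hx v hvZ
        · rcases Finset.mem_insert.mp hv with hvx | hvZ
          · rw [hvx]; exact hx u huZ
          · exact lt_trans hkey (hsep u huZ v hvZ huv)
      have hle' : Fintype.card α - (insert x Z).card ≤ n := by
        have h1 : (insert x Z).card ≤ Fintype.card α := Finset.card_le_univ _
        omega
      exact ih (insert x Z) hle' (Finset.mem_insert_of_mem hs) hsep'

/-- cluster selection in a finite metric space. Given a sequence
`a` of positive reals with `a (i+1) ≤ a i / 2` and a point `s`, there is a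
subset `Z'` containing `s` whose distinct points are `> a (|Z'|-1)` apart and
which admits a (unique) retraction `R : Z → Z'` moving points at most `a |Z'|`. -/
theorem cluster_selection {α : Type*} [MetricSpace α] [Fintype α]
    (a : ℕ → ℝ) (hpos : ∀ i, 0 < a i) (hhalf : ∀ i, a (i + 1) ≤ a i / 2) (s : α) :
    ∃ Z' : Finset α, s ∈ Z' ∧
      (∀ x ∈ Z', ∀ y ∈ Z', x ≠ y → a (Z'.card - 1) < dist x y) ∧
      ∃ R : α → α,
        ((∀ x, R x ∈ Z') ∧ (∀ x ∈ Z', R x = x) ∧ ∀ x, dist (R x) x ≤ a Z'.card) ∧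
        ∀ R' : α → α,
          ((∀ x, R' x ∈ Z') ∧ (∀ x ∈ Z', R' x = x) ∧ ∀ x, dist (R' x) x ≤ a Z'.card) →
          R' = R := by
  obtain ⟨Z', hs, hsep, hcov⟩ := cluster_aux a hpos hhalf s (Fintype.card α) {s}
    (Nat.sub_le _ _) (Finset.mem_singleton_self s)
    (by intro x hx y hy hxy; simp only [Finset.mem_singleton] at hx hy; exact absurd (hx.trans hy.symm) hxy)
  choose R hR hRd using hcov
  have hcardpos : 1 ≤ Z'.card := Finset.card_pos.mpr ⟨s, hs⟩
  have hkey : 2 * a Z'.card ≤ a (Z'.card - 1) := by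
    have := hhalf (Z'.card - 1)
    rw [Nat.sub_add_cancel hcardpos] at this
    linarith
  -- uniqueness of the nearest point
  have huniq : ∀ (u v : α) (x : α), u ∈ Z' → v ∈ Z' → dist u x ≤ a Z'.card →
      dist v x ≤ a Z'.card → u = v := by
    intro u v x hu hv h1 h2
    by_contra hne
    have := hsep u hu v hv hne
    have htri : dist u v ≤ dist u x + dist x v := dist_triangle u x v
    rw [dist_comm x v] at htri
    linarith
  refine ⟨Z', hs, hsep, R, ⟨⟨hR, fun x hx => huniq (R x) x x (hR x) hx (hRd x)
    (by simp [le_of_lt (hpos _)]), hRd⟩, ?_⟩⟩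
  rintro R' ⟨hR'1, _, hR'3⟩
  funext x
  exact huniq (R' x) (R x) x (hR'1 x) (hR x) (hR'3 x) (hRd x)
end

section
/- Let 0 ≤ δ < 1 and suppose z, w, z', w' ∈ ℂ satisfy |z|,|w|,|z'|,|w'| ≤ 1 and zw = z'w' = δ². Then there exist piecewise C¹ paths γ_z, γ_w : [0,1] → ℂ with γ_z(0)=z, γ_z(1)=z', γ_w(0)=w, γ_w(1)=w', such that |γ_z(t)| ≤ 1 and |γ_w(t)| ≤ 1 for all t, γ_z(t)·γ_w(t) = δ² for all t, and the sum of the lengths satisfies ℓ(γ_z) + ℓ(γ_w) ≤ 8π·max{|z−z'|, |w−w'|}. -/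
/-- A path `γ : [0,1] → ℂ` is piecewise C¹ if it is continuous on `[0,1]` and
C¹ on each subinterval of some finite partition of `[0,1]`. -/
def PiecewiseC1On (γ : ℝ → ℂ) : Prop :=
  ContinuousOn γ (Set.Icc 0 1) ∧
  ∃ (m : ℕ) (a : Fin (m + 1) → ℝ), a 0 = 0 ∧ a (Fin.last m) = 1 ∧ Monotone a ∧
    ∀ i : Fin m, ContDiffOn ℝ 1 γ (Set.Icc (a i.castSucc) (a i.succ))

/-- The length of a path `γ : [0,1] → ℂ`: its total variation on `[0,1]`. -/
noncomputable def pathLength (γ : ℝ → ℂ) : ENNReal := eVariationOn γ (Set.Icc 0 1)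

/-!
If `c = z w ≠ 0`, write `z' = z e^{iθ} e^k` with `|θ| ≤ π`; then `w' = w e^{-iθ} e^{-k}`.
Move first along the rotation `(z e^{iθt}, w e^{-iθt})`, then along the radial scaling
`(z e^{iθ} e^{kt}, w e^{-iθ} e^{-kt})`: both keep the product equal to `c` and stay in the
closed unit disc. The rotation has length `(‖z‖ + ‖w‖) |θ|`, and Jordan's inequality gives
`‖z‖ |θ| ≤ (π / 2) ‖z e^{iθ} - z‖ ≤ π ‖z - z'‖`; the scaling has length
`|‖z‖ - ‖z'‖| + |‖w‖ - ‖w'‖|`. So the total is at most `(π + 1) (‖z - z'‖ + ‖w - w'‖)`.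
If `c = 0`, a coordinate vanishes at each end, and straight segments through `(0, 0)` suffice.
-/

open Set Complex
open scoped NNReal ENNReal Real

noncomputable def pathConcat {α : Type*} (f g : ℝ → α) (t : ℝ) : α :=
  if t ≤ 1 / 2 then f (2 * t) else g (2 * t - 1)

section pathConcat

variable {α : Type*} {f g : ℝ → α}

@[simp] lemma pathConcat_zero : pathConcat f g 0 = f 0 := by simp [pathConcat]

@[simp] lemma pathConcat_one : pathConcat f g 1 = g 1 := by norm_num [pathConcat]

lemma eqOn_pathConcat_left : EqOn (pathConcat f g) (f ∘ (2 * ·)) (Iic (1 / 2)) :=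
  fun _ ht => if_pos ht

lemma eqOn_pathConcat_right (h : f 1 = g 0) :
    EqOn (pathConcat f g) (g ∘ (2 * · - 1)) (Ici (1 / 2)) := by
  intro t ht
  rcases (show (1 / 2 : ℝ) ≤ t from ht).eq_or_lt with rfl | ht
  · norm_num [pathConcat, h]
  · exact if_neg (not_le.2 ht)

lemma pathConcat_forall {β : Type*} {f' g' : ℝ → β} {p : α → β → Prop}
    (hf : ∀ t ∈ Icc (0 : ℝ) 1, p (f t) (f' t)) (hg : ∀ t ∈ Icc (0 : ℝ) 1, p (g t) (g' t)) :
    ∀ t ∈ Icc (0 : ℝ) 1, p (pathConcat f g t) (pathConcat f' g' t) := by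
  rintro t ⟨ht₀, ht₁⟩
  unfold pathConcat
  split_ifs with h
  · exact hf _ ⟨by linarith, by linarith⟩
  · exact hg _ ⟨by linarith, by linarith⟩

lemma eVariationOn_pathConcat {E : Type*} [PseudoEMetricSpace E] {f g : ℝ → E} (h : f 1 = g 0) :
    eVariationOn (pathConcat f g) (Icc 0 1) =
      eVariationOn f (Icc 0 1) + eVariationOn g (Icc 0 1) := by
  have hsplit : IsGreatest (Icc (0 : ℝ) (1 / 2)) (1 / 2) ∧ IsLeast (Icc (1 / 2 : ℝ) 1) (1 / 2) :=
    ⟨isGreatest_Icc (by norm_num), isLeast_Icc (by norm_num)⟩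
  have hl : MonotoneOn (2 * · : ℝ → ℝ) univ := fun x _ y _ hxy => by dsimp; linarith
  have hr : MonotoneOn (2 * · - 1 : ℝ → ℝ) univ := fun x _ y _ hxy => by dsimp; linarith
  calc eVariationOn (pathConcat f g) (Icc 0 1)
      = eVariationOn (pathConcat f g) (Icc 0 (1 / 2)) +
          eVariationOn (pathConcat f g) (Icc (1 / 2) 1) := by
        rw [← eVariationOn.union _ hsplit.1 hsplit.2,
          Icc_union_Icc_eq_Icc (by norm_num) (by norm_num)]
    _ = eVariationOn (f ∘ (2 * ·)) (Icc 0 (1 / 2)) +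
          eVariationOn (g ∘ (2 * · - 1)) (Icc (1 / 2) 1) := by
        rw [eVariationOn.eq_of_eqOn (eqOn_pathConcat_left.mono Icc_subset_Iic_self),
          eVariationOn.eq_of_eqOn ((eqOn_pathConcat_right h).mono Icc_subset_Ici_self)]
    _ = eVariationOn f (Icc 0 1) + eVariationOn g (Icc 0 1) := by
        rw [eVariationOn.comp_eq_of_monotoneOn _ _ (hl.mono (subset_univ _)),
          eVariationOn.comp_eq_of_monotoneOn _ _ (hr.mono (subset_univ _)),
          image_mul_left_Icc (by norm_num) (by norm_num)]
        simp only [sub_eq_add_neg]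
        norm_num

end pathConcat

lemma piecewiseC1On_of_halves {γ : ℝ → ℂ} (h₁ : ContDiffOn ℝ 1 γ (Icc 0 (1 / 2)))
    (h₂ : ContDiffOn ℝ 1 γ (Icc (1 / 2) 1)) : PiecewiseC1On γ := by
  refine ⟨?_, 2, ![0, 1 / 2, 1], rfl, rfl, ?_, ?_⟩
  · rw [← Icc_union_Icc_eq_Icc (by norm_num : (0 : ℝ) ≤ 1 / 2) (by norm_num)]
    exact h₁.continuousOn.union_of_isClosed h₂.continuousOn isClosed_Icc isClosed_Icc
  · refine Fin.monotone_iff_le_succ.2 fun i => ?_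
    fin_cases i <;> simp
    norm_num
  · intro i
    fin_cases i
    exacts [h₁, h₂]

lemma piecewiseC1On_of_contDiffOn {γ : ℝ → ℂ} (h : ContDiffOn ℝ 1 γ (Icc 0 1)) :
    PiecewiseC1On γ :=
  piecewiseC1On_of_halves (h.mono (Icc_subset_Icc_right (by norm_num)))
    (h.mono (Icc_subset_Icc_left (by norm_num)))

lemma piecewiseC1On_pathConcat {f g : ℝ → ℂ} (hf : ContDiffOn ℝ 1 f (Icc 0 1))
    (hg : ContDiffOn ℝ 1 g (Icc 0 1)) (h : f 1 = g 0) : PiecewiseC1On (pathConcat f g) := by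
  refine piecewiseC1On_of_halves ?_ ?_
  · refine (hf.comp (by fun_prop : ContDiff ℝ 1 (2 * · : ℝ → ℝ)).contDiffOn ?_).congr
      (eqOn_pathConcat_left.mono Icc_subset_Iic_self)
    rintro t ⟨h₀, h₁⟩; constructor <;> dsimp <;> linarith
  · refine (hg.comp (by fun_prop : ContDiff ℝ 1 (2 * · - 1 : ℝ → ℝ)).contDiffOn ?_).congr
      ((eqOn_pathConcat_right h).mono Icc_subset_Ici_self)
    rintro t ⟨h₀, h₁⟩; constructor <;> dsimp <;> linarith

lemma LipschitzWith.pathLength_le {γ : ℝ → ℂ} {C : ℝ≥0} (h : LipschitzWith C γ) :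
    pathLength γ ≤ C := by
  simpa [pathLength] using h.lipschitzOnWith.comp_eVariationOn_le (mapsTo_id (Icc (0 : ℝ) 1))

lemma eVariationOn_neg {α : Type*} [LinearOrder α] {f : α → ℝ} {s : Set α} :
    eVariationOn (fun x => -f x) s = eVariationOn f s := by
  simp only [eVariationOn, edist_neg_neg]

lemma AntitoneOn.eVariationOn_eq {α : Type*} [LinearOrder α] {f : α → ℝ} {s : Set α} {a b : α}
    (hf : AntitoneOn f s) (as : a ∈ s) (bs : b ∈ s) :
    eVariationOn f (s ∩ Icc a b) = ENNReal.ofReal (f a - f b) := by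
  rw [← eVariationOn_neg, hf.neg.eVariationOn_eq as bs, neg_sub_neg]

lemma eVariationOn_rexp_mul (k : ℝ) :
    eVariationOn (fun t => Real.exp (t * k)) (Icc 0 1) = ENNReal.ofReal |Real.exp k - 1| := by
  have h₀ : (0 : ℝ) ∈ Icc 0 1 := left_mem_Icc.2 zero_le_one
  have h₁ : (1 : ℝ) ∈ Icc 0 1 := right_mem_Icc.2 zero_le_one
  rcases le_total 0 k with hk | hk
  · have hmono : MonotoneOn (fun t => Real.exp (t * k)) (Icc 0 1) :=
      fun x _ y _ hxy => Real.exp_le_exp.2 (mul_le_mul_of_nonneg_right hxy hk)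
    rw [← inter_self (Icc (0 : ℝ) 1), hmono.eVariationOn_eq h₀ h₁,
      abs_of_nonneg (sub_nonneg.2 (Real.one_le_exp hk))]
    simp
  · have hanti : AntitoneOn (fun t => Real.exp (t * k)) (Icc 0 1) :=
      fun x _ y _ hxy => Real.exp_le_exp.2 (mul_le_mul_of_nonpos_right hxy hk)
    rw [← inter_self (Icc (0 : ℝ) 1), hanti.eVariationOn_eq h₀ h₁,
      abs_of_nonpos (sub_nonpos.2 (Real.exp_le_one_iff.2 hk))]
    simp

lemma pathLength_mul_exp_ofReal_le (a : ℂ) (k : ℝ) :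
    pathLength (fun t : ℝ => a * exp (t * k)) ≤ ENNReal.ofReal (‖a‖ * |Real.exp k - 1|) := by
  have hlip : LipschitzWith ‖a‖₊ (fun x : ℝ => a * x) :=
    LipschitzWith.of_dist_le_mul fun x y => by
      rw [dist_eq_norm, ← mul_sub, ← ofReal_sub, norm_mul, norm_real, Real.dist_eq, coe_nnnorm,
        Real.norm_eq_abs]
  calc pathLength (fun t : ℝ => a * exp (t * k))
      = eVariationOn ((fun x : ℝ => a * x) ∘ fun t => Real.exp (t * k)) (Icc 0 1) := by
        simp [pathLength, Function.comp_def]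
    _ ≤ ‖a‖₊ * eVariationOn (fun t => Real.exp (t * k)) (Icc 0 1) :=
        hlip.lipschitzOnWith.comp_eVariationOn_le (mapsTo_univ _ _)
    _ = ENNReal.ofReal (‖a‖ * |Real.exp k - 1|) := by
        rw [eVariationOn_rexp_mul, ENNReal.ofReal_mul (norm_nonneg a), ofReal_norm]
        rfl

lemma pathLength_mul_exp_mul_I_le (a : ℂ) (θ : ℝ) :
    pathLength (fun t : ℝ => a * exp (t * (θ * I))) ≤ ENNReal.ofReal (‖a‖ * |θ|) := by
  have hlip : LipschitzWith (Real.toNNReal (‖a‖ * |θ|)) (fun t : ℝ => a * exp (t * (θ * I))) := by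
    refine LipschitzWith.of_dist_le_mul fun x y => ?_
    have hsplit : a * exp (x * (θ * I)) - a * exp (y * (θ * I)) =
        a * exp (y * (θ * I)) * (exp (I * ↑((x - y) * θ)) - 1) := by
      rw [mul_sub, mul_one, mul_assoc, ← exp_add]
      congr 3
      push_cast
      ring
    rw [dist_eq_norm, hsplit, norm_mul, norm_mul, norm_exp, Real.coe_toNNReal _ (by positivity),
      Real.dist_eq]
    calc ‖a‖ * Real.exp (↑y * (↑θ * I)).re * ‖exp (I * ↑((x - y) * θ)) - 1‖
        ≤ ‖a‖ * 1 * ‖(x - y) * θ‖ := by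
          gcongr
          · simp
          · exact Real.norm_exp_I_mul_ofReal_sub_one_le
      _ = ‖a‖ * |θ| * |x - y| := by
          rw [Real.norm_eq_abs, abs_mul]
          ring
  exact hlip.pathLength_le

def AnnulusJoin (P : (ℝ → ℂ) → Prop) (c z w z' w' : ℂ) (L : ℝ≥0∞) : Prop :=
  ∃ γz γw : ℝ → ℂ, P γz ∧ P γw ∧
    γz 0 = z ∧ γz 1 = z' ∧ γw 0 = w ∧ γw 1 = w' ∧
    (∀ t ∈ Icc (0 : ℝ) 1, ‖γz t‖ ≤ 1 ∧ ‖γw t‖ ≤ 1) ∧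
    (∀ t ∈ Icc (0 : ℝ) 1, γz t * γw t = c) ∧
    pathLength γz + pathLength γw ≤ L

namespace AnnulusJoin

variable {P Q : (ℝ → ℂ) → Prop} {c z w z' w' : ℂ} {L L' : ℝ≥0∞}

lemma mono (h : AnnulusJoin P c z w z' w' L) (hPQ : ∀ γ, P γ → Q γ) (hL : L ≤ L') :
    AnnulusJoin Q c z w z' w' L' := by
  obtain ⟨γz, γw, hz, hw, h0, h1, h2, h3, hnorm, hprod, hlen⟩ := h
  exact ⟨γz, γw, hPQ _ hz, hPQ _ hw, h0, h1, h2, h3, hnorm, hprod, hlen.trans hL⟩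

lemma swap (h : AnnulusJoin P c z w z' w' L) : AnnulusJoin P c w z w' z' L := by
  obtain ⟨γz, γw, hz, hw, h0, h1, h2, h3, hnorm, hprod, hlen⟩ := h
  exact ⟨γw, γz, hw, hz, h2, h3, h0, h1, fun t ht => (hnorm t ht).symm,
    fun t ht => by rw [mul_comm, hprod t ht], by rwa [add_comm]⟩

lemma trans {z₁ w₁ : ℂ} {L₁ L₂ : ℝ≥0∞}
    (h₁ : AnnulusJoin (ContDiffOn ℝ 1 · (Icc 0 1)) c z w z₁ w₁ L₁)
    (h₂ : AnnulusJoin (ContDiffOn ℝ 1 · (Icc 0 1)) c z₁ w₁ z' w' L₂) :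
    AnnulusJoin PiecewiseC1On c z w z' w' (L₁ + L₂) := by
  obtain ⟨fz, fw, hfz, hfw, hfz₀, hfz₁, hfw₀, hfw₁, hfn, hfp, hfl⟩ := h₁
  obtain ⟨gz, gw, hgz, hgw, hgz₀, hgz₁, hgw₀, hgw₁, hgn, hgp, hgl⟩ := h₂
  have hz : fz 1 = gz 0 := hfz₁.trans hgz₀.symm
  have hw : fw 1 = gw 0 := hfw₁.trans hgw₀.symm
  refine ⟨pathConcat fz gz, pathConcat fw gw, piecewiseC1On_pathConcat hfz hgz hz,
    piecewiseC1On_pathConcat hfw hgw hw, by simp [hfz₀], by simp [hgz₁], by simp [hfw₀],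
    by simp [hgw₁], pathConcat_forall (p := fun a b => ‖a‖ ≤ 1 ∧ ‖b‖ ≤ 1) hfn hgn,
    pathConcat_forall (p := fun a b => a * b = c) hfp hgp, ?_⟩
  rw [pathLength, pathLength, eVariationOn_pathConcat hz, eVariationOn_pathConcat hw,
    add_add_add_comm]
  exact add_le_add hfl hgl

end AnnulusJoin

lemma annulusJoin_segment {w w' : ℂ} (hw : ‖w‖ ≤ 1) (hw' : ‖w'‖ ≤ 1) :
    AnnulusJoin (ContDiffOn ℝ 1 · (Icc 0 1)) 0 0 w 0 w' (ENNReal.ofReal ‖w - w'‖) := by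
  refine ⟨fun _ => 0, AffineMap.lineMap w w', contDiffOn_const,
    (by fun_prop : ContDiff ℝ 1 (AffineMap.lineMap w w' : ℝ → ℂ)).contDiffOn, rfl, rfl,
    by simp, by simp, fun t ht => ⟨by simp, ?_⟩, fun t _ => zero_mul _, ?_⟩
  · simpa using
      (convex_closedBall (0 : ℂ) 1).lineMap_mem (by simpa using hw) (by simpa using hw') ht
  · calc pathLength (fun _ => 0) + pathLength (AffineMap.lineMap w w')
        ≤ 0 + nndist w w' :=
          add_le_add (by simpa using (LipschitzWith.const (0 : ℂ)).pathLength_le)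
            (lipschitzWith_lineMap w w').pathLength_le
      _ = ENNReal.ofReal ‖w - w'‖ := by rw [zero_add, ← edist_nndist, edist_dist, dist_eq_norm]

lemma norm_mul_exp_mul_le (a κ : ℂ) {t : ℝ} (ht : t ∈ Icc (0 : ℝ) 1) :
    ‖a * exp (t * κ)‖ ≤ max ‖a‖ ‖a * exp κ‖ := by
  have hexp : Real.exp (t * κ.re) ≤ max 1 (Real.exp κ.re) := by
    rcases le_total 0 κ.re with hκ | hκ
    · exact le_max_of_le_right (Real.exp_le_exp.2 (by nlinarith [ht.2]))
    · exact le_max_of_le_left (Real.exp_le_one_iff.2 (by nlinarith [ht.1]))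
  calc ‖a * exp (t * κ)‖ = ‖a‖ * Real.exp (t * κ.re) := by rw [norm_mul, norm_exp, re_ofReal_mul]
    _ ≤ ‖a‖ * max 1 (Real.exp κ.re) := by gcongr
    _ = max ‖a‖ ‖a * exp κ‖ := by
        rw [mul_max_of_nonneg _ _ (norm_nonneg a), mul_one, norm_mul, norm_exp]

lemma annulusJoin_mul_exp {a b : ℂ} (κ : ℂ) (ha : ‖a‖ ≤ 1) (hb : ‖b‖ ≤ 1)
    (ha' : ‖a * exp κ‖ ≤ 1) (hb' : ‖b * exp (-κ)‖ ≤ 1) :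
    AnnulusJoin (ContDiffOn ℝ 1 · (Icc 0 1)) (a * b) a b (a * exp κ) (b * exp (-κ))
      (pathLength (fun t : ℝ => a * exp (t * κ)) + pathLength (fun t : ℝ => b * exp (t * -κ))) := by
  have hsmooth (d μ : ℂ) : ContDiff ℝ 1 (fun t : ℝ => d * exp (t * μ)) :=
    contDiff_const.mul ((ofRealCLM.contDiff.mul contDiff_const).cexp)
  refine ⟨_, _, (hsmooth a κ).contDiffOn, (hsmooth b (-κ)).contDiffOn, by simp, by simp, by simp,
    by simp, fun t ht => ⟨?_, ?_⟩, fun t _ => ?_, le_rfl⟩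
  · exact (norm_mul_exp_mul_le a κ ht).trans (max_le ha ha')
  · exact (norm_mul_exp_mul_le b (-κ) ht).trans (max_le hb hb')
  · rw [mul_mul_mul_comm, ← exp_add, mul_neg, add_neg_cancel, exp_zero, mul_one]

lemma abs_le_pi_div_two_mul_norm_exp_sub_one {θ : ℝ} (hθ : |θ| ≤ π) :
    |θ| ≤ π / 2 * ‖exp (θ * I) - 1‖ := by
  have hsin := Real.mul_abs_le_abs_sin (x := θ / 2) (by rw [abs_div, abs_two]; linarith)
  rw [abs_div, abs_two] at hsin
  rw [mul_comm (θ : ℂ), norm_exp_I_mul_ofReal_sub_one, norm_mul, Real.norm_eq_abs,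
    Real.norm_eq_abs, abs_two]
  have := Real.pi_pos
  calc |θ| = π * (2 / π * (|θ| / 2)) := by field_simp
    _ ≤ π * |Real.sin (θ / 2)| := by gcongr
    _ = π / 2 * (2 * |Real.sin (θ / 2)|) := by ring

lemma norm_mul_abs_add_norm_mul_abs_le (a : ℂ) {θ : ℝ} (hθ : |θ| ≤ π) (k : ℝ) :
    ‖a‖ * |θ| + ‖a‖ * |Real.exp k - 1| ≤ (π + 1) * ‖a - a * exp (θ * I) * exp k‖ := by
  set D := ‖a - a * exp (θ * I) * exp k‖
  have hrot : ‖a * exp (θ * I)‖ = ‖a‖ := by rw [norm_mul, norm_exp_ofReal_mul_I, mul_one]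
  have hexp : ‖exp (k : ℂ) - 1‖ = |Real.exp k - 1| := by
    rw [← ofReal_exp, ← ofReal_one, ← ofReal_sub, norm_real, Real.norm_eq_abs]
  have hradial : ‖a‖ * |Real.exp k - 1| ≤ D := by
    calc ‖a‖ * |Real.exp k - 1| = |‖a * exp (θ * I) * exp k‖ - ‖a‖| := by
          rw [norm_mul, hrot, ← ofReal_exp, norm_real, Real.norm_of_nonneg (Real.exp_pos k).le,
            ← mul_sub_one, abs_mul, abs_norm]
      _ ≤ D := (abs_norm_sub_norm_le _ _).trans_eq (norm_sub_rev _ _)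
  have hangular : ‖a‖ * ‖exp (θ * I) - 1‖ ≤ 2 * D := by
    calc ‖a‖ * ‖exp (θ * I) - 1‖
        = ‖(a * exp (θ * I) - a * exp (θ * I) * exp k) + (a * exp (θ * I) * exp k - a)‖ := by
          rw [← norm_mul, mul_sub_one]; ring_nf
      _ ≤ ‖a * exp (θ * I)‖ * ‖exp (k : ℂ) - 1‖ + D := by
          refine (norm_add_le _ _).trans (add_le_add (le_of_eq ?_) (norm_sub_rev _ _).le)
          rw [← norm_mul, mul_sub_one, norm_sub_rev]
      _ ≤ 2 * D := by rw [hrot, hexp]; linarith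
  have hangle : ‖a‖ * |θ| ≤ π * D :=
    calc ‖a‖ * |θ| ≤ ‖a‖ * (π / 2 * ‖exp (θ * I) - 1‖) :=
          mul_le_mul_of_nonneg_left (abs_le_pi_div_two_mul_norm_exp_sub_one hθ) (norm_nonneg a)
      _ = π / 2 * (‖a‖ * ‖exp (θ * I) - 1‖) := by ring
      _ ≤ π / 2 * (2 * D) := by gcongr
      _ = π * D := by ring
  linarith

lemma exists_eq_mul_exp_mul_exp {z z' : ℂ} (hz : z ≠ 0) (hz' : z' ≠ 0) :
    ∃ θ k : ℝ, |θ| ≤ π ∧ z' = z * exp (θ * I) * exp k := by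
  refine ⟨(log (z' / z)).im, (log (z' / z)).re, by simpa [log_im] using abs_arg_le_pi (z' / z), ?_⟩
  rw [mul_assoc, ← exp_add, add_comm, re_add_im, exp_log (div_ne_zero hz' hz)]
  field_simp

lemma annulusJoin_of_ne_zero {c z w z' w' : ℂ} (hc : c ≠ 0) (hz : ‖z‖ ≤ 1) (hw : ‖w‖ ≤ 1)
    (hz' : ‖z'‖ ≤ 1) (hw' : ‖w'‖ ≤ 1) (hzw : z * w = c) (hzw' : z' * w' = c) :
    AnnulusJoin PiecewiseC1On c z w z' w' (ENNReal.ofReal ((π + 1) * (‖z - z'‖ + ‖w - w'‖))) := by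
  obtain ⟨θ, k, hθ, rfl⟩ :=
    exists_eq_mul_exp_mul_exp (left_ne_zero_of_mul (hzw ▸ hc)) (left_ne_zero_of_mul (hzw' ▸ hc))
  obtain rfl : w' = w * exp (-(θ * I)) * exp (-k) := by
    have hz₀ : z * exp (θ * I) * exp k ≠ 0 := left_ne_zero_of_mul (hzw' ▸ hc)
    refine mul_left_cancel₀ hz₀ ?_
    rw [hzw', ← hzw, exp_neg, exp_neg]
    field_simp
  subst hzw
  have hz₁ : ‖z * exp (θ * I)‖ = ‖z‖ := by rw [norm_mul, norm_exp_ofReal_mul_I, mul_one]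
  have hw₁ : ‖w * exp (-(θ * I))‖ = ‖w‖ := by
    rw [← neg_mul, ← ofReal_neg, norm_mul, norm_exp_ofReal_mul_I, mul_one]
  have hrot := annulusJoin_mul_exp (θ * I) hz hw (hz₁.trans_le hz) (hw₁.trans_le hw)
  have hscale := annulusJoin_mul_exp (a := z * exp (θ * I)) (b := w * exp (-(θ * I))) k
    (hz₁.trans_le hz) (hw₁.trans_le hw) hz' hw'
  rw [mul_mul_mul_comm, ← exp_add, add_neg_cancel, exp_zero, mul_one] at hscale
  refine (hrot.trans hscale).mono (fun _ h => h) ?_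
  have l₁ := pathLength_mul_exp_mul_I_le z θ
  have l₂ := pathLength_mul_exp_mul_I_le w (-θ)
  have l₃ := pathLength_mul_exp_ofReal_le (z * exp (θ * I)) k
  have l₄ := pathLength_mul_exp_ofReal_le (w * exp (-(θ * I))) (-k)
  have k₁ := norm_mul_abs_add_norm_mul_abs_le z hθ k
  have k₂ := norm_mul_abs_add_norm_mul_abs_le w (θ := -θ) (by rwa [abs_neg]) (-k)
  simp only [ofReal_neg, neg_mul, abs_neg] at l₂ l₄ k₂
  rw [hz₁] at l₃
  rw [hw₁] at l₄
  calc _ ≤ ENNReal.ofReal (‖z‖ * |θ|) + ENNReal.ofReal (‖w‖ * |θ|) +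
        (ENNReal.ofReal (‖z‖ * |Real.exp k - 1|) + ENNReal.ofReal (‖w‖ * |Real.exp (-k) - 1|)) :=
        add_le_add (add_le_add l₁ l₂) (add_le_add l₃ l₄)
    _ = ENNReal.ofReal (‖z‖ * |θ| + ‖w‖ * |θ| +
        (‖z‖ * |Real.exp k - 1| + ‖w‖ * |Real.exp (-k) - 1|)) := by
        rw [← ENNReal.ofReal_add (by positivity) (by positivity),
          ← ENNReal.ofReal_add (by positivity) (by positivity),
          ← ENNReal.ofReal_add (by positivity) (by positivity)]
    _ ≤ _ := ENNReal.ofReal_le_ofReal (by linarith)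

lemma annulusJoin_zero_of_left_eq_zero {w z' w' : ℂ} (hw : ‖w‖ ≤ 1) (hz' : ‖z'‖ ≤ 1)
    (hw' : ‖w'‖ ≤ 1) (hzw' : z' * w' = 0) :
    AnnulusJoin PiecewiseC1On 0 0 w z' w' (ENNReal.ofReal (‖0 - z'‖ + ‖w - w'‖)) := by
  rcases mul_eq_zero.1 hzw' with rfl | rfl
  · exact (annulusJoin_segment hw hw').mono (fun _ => piecewiseC1On_of_contDiffOn)
      (ENNReal.ofReal_le_ofReal (by simp))
  · refine ((annulusJoin_segment hw (by simp)).trans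
      (annulusJoin_segment (by simp) hz').swap).mono (fun _ h => h) ?_
    rw [← ENNReal.ofReal_add (norm_nonneg _) (norm_nonneg _), add_comm]

lemma annulusJoin_zero {z w z' w' : ℂ} (hz : ‖z‖ ≤ 1) (hw : ‖w‖ ≤ 1) (hz' : ‖z'‖ ≤ 1)
    (hw' : ‖w'‖ ≤ 1) (hzw : z * w = 0) (hzw' : z' * w' = 0) :
    AnnulusJoin PiecewiseC1On 0 z w z' w' (ENNReal.ofReal (‖z - z'‖ + ‖w - w'‖)) := by
  rcases mul_eq_zero.1 hzw with rfl | rfl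
  · exact annulusJoin_zero_of_left_eq_zero hw hz' hw' hzw'
  · simpa only [add_comm] using
      (annulusJoin_zero_of_left_eq_zero hz hw' hz' (by rw [mul_comm, hzw'])).swap

lemma annulusJoin_of_mul_eq {c z w z' w' : ℂ} (hz : ‖z‖ ≤ 1) (hw : ‖w‖ ≤ 1) (hz' : ‖z'‖ ≤ 1)
    (hw' : ‖w'‖ ≤ 1) (hzw : z * w = c) (hzw' : z' * w' = c) :
    AnnulusJoin PiecewiseC1On c z w z' w' (ENNReal.ofReal ((π + 1) * (‖z - z'‖ + ‖w - w'‖))) := by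
  rcases eq_or_ne c 0 with rfl | hc
  · exact (annulusJoin_zero hz hw hz' hw' hzw hzw').mono (fun _ h => h)
      (ENNReal.ofReal_le_ofReal (le_mul_of_one_le_left (by positivity) (by linarith [Real.pi_pos])))
  · exact annulusJoin_of_ne_zero hc hz hw hz' hw' hzw hzw'

theorem annulus_flat_dist_general (δ : ℝ) (z w z' w' : ℂ)
    (hz : ‖z‖ ≤ 1) (hw : ‖w‖ ≤ 1)
    (hz' : ‖z'‖ ≤ 1) (hw' : ‖w'‖ ≤ 1)
    (hzw : z * w = (δ : ℂ) ^ 2) (hzw' : z' * w' = (δ : ℂ) ^ 2) :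
    ∃ γz γw : ℝ → ℂ, PiecewiseC1On γz ∧ PiecewiseC1On γw ∧
      γz 0 = z ∧ γz 1 = z' ∧ γw 0 = w ∧ γw 1 = w' ∧
      (∀ t ∈ Set.Icc (0 : ℝ) 1, ‖γz t‖ ≤ 1 ∧ ‖γw t‖ ≤ 1) ∧
      (∀ t ∈ Set.Icc (0 : ℝ) 1, γz t * γw t = (δ : ℂ) ^ 2) ∧
      pathLength γz + pathLength γw ≤
        ENNReal.ofReal (8 * Real.pi * max (‖z - z'‖) (‖w - w'‖)) := by
  have hsum : ‖z - z'‖ + ‖w - w'‖ ≤ 2 * max ‖z - z'‖ ‖w - w'‖ := by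
    linarith [le_max_left ‖z - z'‖ ‖w - w'‖, le_max_right ‖z - z'‖ ‖w - w'‖]
  have hbound : (π + 1) * (‖z - z'‖ + ‖w - w'‖) ≤ 8 * π * max ‖z - z'‖ ‖w - w'‖ := by
    nlinarith [Real.pi_gt_three, norm_nonneg (z - z'), norm_nonneg (w - w')]
  exact (annulusJoin_of_mul_eq hz hw hz' hw' hzw hzw').mono (fun _ h => h)
    (ENNReal.ofReal_le_ofReal hbound)

/-- in the model annulus `{ab = δ², |a|,|b| ≤ 1}` (0 ≤ δ < 1),
any two points `(z,w)` and `(z',w')` are joined by a pair of piecewise C¹ paths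
`γ_z, γ_w` with `γ_z γ_w ≡ δ²`, staying in the closed unit disc, of total length
`ℓ(γ_z) + ℓ(γ_w) ≤ 8π·max{|z-z'|, |w-w'|}`. -/
theorem annulus_flat_dist (δ : ℝ) (hδ0 : 0 ≤ δ) (hδ1 : δ < 1) (z w z' w' : ℂ)
    (hz : ‖z‖ ≤ 1) (hw : ‖w‖ ≤ 1)
    (hz' : ‖z'‖ ≤ 1) (hw' : ‖w'‖ ≤ 1)
    (hzw : z * w = (δ : ℂ) ^ 2) (hzw' : z' * w' = (δ : ℂ) ^ 2) :
    ∃ γz γw : ℝ → ℂ, PiecewiseC1On γz ∧ PiecewiseC1On γw ∧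
      γz 0 = z ∧ γz 1 = z' ∧ γw 0 = w ∧ γw 1 = w' ∧
      (∀ t ∈ Set.Icc (0 : ℝ) 1, ‖γz t‖ ≤ 1 ∧ ‖γw t‖ ≤ 1) ∧
      (∀ t ∈ Set.Icc (0 : ℝ) 1, γz t * γw t = (δ : ℂ) ^ 2) ∧
      pathLength γz + pathLength γw ≤
        ENNReal.ofReal (8 * Real.pi * max (‖z - z'‖) (‖w - w'‖)) :=
  annulus_flat_dist_general δ z w z' w' hz hw hz' hw' hzw hzw'
end

section
/- Let 0 < R ≤ R' be real numbers and let a, b ∈ ℂ with R ≤ |a|, |b| ≤ R'. Then a and b can be joined by a piecewise C¹ path lying entirely in the closed annulus {ζ ∈ ℂ : R ≤ |ζ| ≤ R'} whose Euclidean length is at most (π/2)·|a − b|. -/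
/-!
Write `a = ra • u` and `b = rb • e^{iβ} • u` with `‖u‖ = 1`, `|β| ≤ π`, and let `r = min ra rb`.
The path runs radially from `a` to the circle of radius `r`, along it through the angle `β`, and
radially out to `b`; it stays in the annulus and has length `|ra - rb| + r |β|`.
Since `‖a - b‖² = (ra - rb)² + 4 ra rb sin² (β / 2)`, the length bound amounts to the
nonnegativity of a binary quadratic form in `(|ra - rb|, r)`, whose coefficients are controlled by
Jordan's inequality `sin x ≥ 2x / π` and, for `x ≤ 1`, by `sin x ≥ x - x³ / 6`.
-/

open Set

theorem eVariationOn_add_le {α E : Type*} [LinearOrder α] [SeminormedAddCommGroup E]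
    (f g : α → E) (s : Set α) :
    eVariationOn (f + g) s ≤ eVariationOn f s + eVariationOn g s := by
  refine iSup_le fun ⟨n, u, hu, us⟩ => ?_
  calc ∑ i ∈ Finset.range n, edist ((f + g) (u (i + 1))) ((f + g) (u i))
      ≤ ∑ i ∈ Finset.range n,
          (edist (f (u (i + 1))) (f (u i)) + edist (g (u (i + 1))) (g (u i))) :=
        Finset.sum_le_sum fun i _ => edist_add_add_le _ _ _ _
    _ ≤ eVariationOn f s + eVariationOn g s := by
      rw [Finset.sum_add_distrib]
      exact add_le_add (eVariationOn.sum_le hu us) (eVariationOn.sum_le hu us)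

theorem LipschitzWith.eVariationOn_comp_le_of_monotoneOn {α E : Type*} [LinearOrder α]
    [PseudoEMetricSpace E] {g : ℝ → E} {K : NNReal} (hg : LipschitzWith K g) {φ : α → ℝ}
    {a b : α} (hφ : MonotoneOn φ (Icc a b)) (hab : a ≤ b) :
    eVariationOn (g ∘ φ) (Icc a b) ≤ K * ENNReal.ofReal (φ b - φ a) := by
  have hφvar := hφ.eVariationOn_eq (left_mem_Icc.2 hab) (right_mem_Icc.2 hab)
  rw [inter_self] at hφvar
  rw [← hφvar]
  exact (hg.lipschitzOnWith (s := univ)).comp_eVariationOn_le (mapsTo_univ _ _)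

theorem piecewiseC1On_of_contDiffOn_Icc {γ : ℝ → ℂ} {m : ℕ} (hm : m ≠ 0)
    (hγ : ContinuousOn γ (Icc 0 1))
    (h : ∀ j : ℕ, j < m → ContDiffOn ℝ 1 γ (Icc (j / m) ((j + 1) / m))) : PiecewiseC1On γ := by
  refine ⟨hγ, m, fun i => i / m, by simp, by simp [hm], fun i j hij => ?_, fun i => ?_⟩
  · show (i : ℝ) / m ≤ (j : ℝ) / m
    gcongr
    exact_mod_cast hij
  · simpa using h i i.isLt

def ramp (x : ℝ) : ℝ := max 0 (min 1 x)

theorem ramp_of_nonpos {x : ℝ} (hx : x ≤ 0) : ramp x = 0 := by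
  simp [ramp, hx]

theorem ramp_of_one_le {x : ℝ} (hx : 1 ≤ x) : ramp x = 1 := by
  simp [ramp, hx]

theorem ramp_of_mem_Icc {x : ℝ} (hx : x ∈ Icc 0 1) : ramp x = x := by
  simp [ramp, hx.1, hx.2]

theorem ramp_nonneg (x : ℝ) : 0 ≤ ramp x := le_max_left _ _

theorem ramp_le_one (x : ℝ) : ramp x ≤ 1 := max_le zero_le_one (min_le_left _ _)

theorem monotone_ramp : Monotone ramp := fun _ _ h => max_le_max le_rfl (min_le_min le_rfl h)

@[fun_prop]
theorem continuous_ramp : Continuous ramp := by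
  unfold ramp
  fun_prop

theorem ramp_sub_one_eq_zero_or_ramp_eq_one (x : ℝ) : ramp (x - 1) = 0 ∨ ramp x = 1 := by
  rcases le_total x 1 with h | h
  · exact .inl (ramp_of_nonpos (by linarith))
  · exact .inr (ramp_of_one_le h)

theorem contDiffOn_ramp_Icc (n : ℤ) : ContDiffOn ℝ ⊤ ramp (Icc n (n + 1)) := by
  rcases lt_trichotomy n 0 with hn | rfl | hn
  · refine contDiffOn_const.congr fun x hx => ramp_of_nonpos ?_
    have : (n : ℝ) + 1 ≤ 0 := by exact_mod_cast hn
    linarith [hx.2]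
  · exact contDiffOn_id.congr fun x hx => ramp_of_mem_Icc (by simpa using hx)
  · refine contDiffOn_const.congr fun x hx => ramp_of_one_le ?_
    have : (1 : ℝ) ≤ n := by exact_mod_cast hn
    linarith [hx.1]

theorem contDiffOn_ramp_three_mul_sub (j k : ℤ) :
    ContDiffOn ℝ ⊤ (fun t => ramp (3 * t - k)) (Icc (j / 3) ((j + 1) / 3)) := by
  refine (contDiffOn_ramp_Icc (j - k)).comp (by fun_prop) fun t ht => ?_
  push_cast
  constructor <;> linarith [ht.1, ht.2]

theorem LipschitzWith.eVariationOn_comp_ramp_le {E : Type*} [PseudoEMetricSpace E] {g : ℝ → E}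
    {K : NNReal} (hg : LipschitzWith K g) {k : ℝ} (hk₀ : 0 ≤ k) (hk₂ : k ≤ 2) :
    eVariationOn (fun t => g (ramp (3 * t - k))) (Icc 0 1) ≤ K := by
  have hφ : MonotoneOn (fun t : ℝ => ramp (3 * t - k)) (Icc 0 1) :=
    fun x _ y _ h => monotone_ramp (by linarith)
  refine (hg.eVariationOn_comp_le_of_monotoneOn hφ zero_le_one).trans_eq ?_
  rw [ramp_of_one_le (by linarith), ramp_of_nonpos (by linarith)]
  simp

section Detour

open Complex

def detourRadius (ra r rb t : ℝ) : ℝ :=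
  ra + (r - ra) * ramp (3 * t) + (rb - r) * ramp (3 * t - 2)

/-- Radial segment from `ra • u` to the circle of radius `r`, arc of angle `β` on it, radial segment
out to `rb • e^{iβ} • u`, each run in a third of the unit time. -/
noncomputable def detour (ra r rb β : ℝ) (u : ℂ) (t : ℝ) : ℂ :=
  detourRadius ra r rb t * exp ((β * ramp (3 * t - 1) : ℝ) * I) * u

variable {ra r rb β : ℝ} {u : ℂ}

theorem detour_zero : detour ra r rb β u 0 = ra * u := by
  norm_num [detour, detourRadius, ramp_of_nonpos]

theorem detour_one : detour ra r rb β u 1 = rb * exp (β * I) * u := by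
  norm_num [detour, detourRadius, ramp_of_one_le]

theorem detourRadius_mem_Icc {R R' : ℝ} (ha : ra ∈ Icc R R') (h : r ∈ Icc R R')
    (hb : rb ∈ Icc R R') (t : ℝ) : detourRadius ra r rb t ∈ Icc R R' := by
  have hp := ramp_le_one (3 * t)
  have hq := ramp_nonneg (3 * t - 2)
  have hpq : ramp (3 * t - 2) ≤ ramp (3 * t) := monotone_ramp (by linarith)
  -- a convex combination of `ra`, `r`, `rb` with weights `1 - ramp (3t)`,
  -- `ramp (3t) - ramp (3t - 2)` and `ramp (3t - 2)`
  unfold detourRadius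
  constructor <;> nlinarith [ha.1, ha.2, h.1, h.2, hb.1, hb.2]

theorem norm_detour (hu : ‖u‖ = 1) (t : ℝ) :
    ‖detour ra r rb β u t‖ = |detourRadius ra r rb t| := by
  rw [detour, norm_mul, norm_mul, hu, norm_exp_ofReal_mul_I, norm_real, Real.norm_eq_abs,
    mul_one, mul_one]

theorem continuous_detour : Continuous (detour ra r rb β u) := by
  unfold detour detourRadius
  fun_prop

theorem contDiffOn_detour_Icc (j : ℤ) :
    ContDiffOn ℝ ⊤ (detour ra r rb β u) (Icc (j / 3) ((j + 1) / 3)) := by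
  have h₀ := contDiffOn_ramp_three_mul_sub j 0
  have h₁ := contDiffOn_ramp_three_mul_sub j 1
  have h₂ := contDiffOn_ramp_three_mul_sub j 2
  simp only [Int.cast_zero, sub_zero, Int.cast_one, Int.cast_ofNat] at h₀ h₁ h₂
  have hc : ContDiff ℝ ⊤ ((↑) : ℝ → ℂ) := ofRealCLM.contDiff
  unfold detour detourRadius
  fun_prop

/-- Each summand depends on a single ramp, which makes the variation easy to bound. -/
theorem detour_eq_add (t : ℝ) : detour ra r rb β u t =
    (ra - r) * (1 - ramp (3 * t)) * u + r * exp ((β * ramp (3 * t - 1) : ℝ) * I) * u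
      + (rb - r) * ramp (3 * t - 2) * exp (β * I) * u := by
  have h₁ := ramp_sub_one_eq_zero_or_ramp_eq_one (3 * t)
  have h₂ := ramp_sub_one_eq_zero_or_ramp_eq_one (3 * t - 1)
  rw [show 3 * t - 1 - 1 = 3 * t - 2 by ring] at h₂
  unfold detour detourRadius
  rcases h₂ with h₂ | h₂
  · rcases h₁ with h₁ | h₁ <;> simp [h₁, h₂]
    ring
  · have h₁ : ramp (3 * t) = 1 :=
      le_antisymm (ramp_le_one _) (h₂ ▸ monotone_ramp (by linarith))
    simp [h₁, h₂]
    ring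

theorem eVariationOn_detour_le (hu : ‖u‖ = 1) :
    eVariationOn (detour ra r rb β u) (Icc 0 1)
      ≤ ENNReal.ofReal (|ra - r| + |r| * |β| + |rb - r|) := by
  have hsum : detour ra r rb β u =
      (fun t => (ra - r) * (1 - (ramp (3 * t - 0) : ℂ)) * u)
      + (fun t => r * exp ((β * ramp (3 * t - 1) : ℝ) * I) * u)
      + (fun t => (rb - r) * ramp (3 * t - 2) * exp (β * I) * u) := by
    ext t
    simp [detour_eq_add]
  have h₀ : LipschitzWith ‖ra - r‖₊ fun x : ℝ => (ra - r) * (1 - (x : ℂ)) * u := by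
    refine LipschitzWith.of_dist_le_mul fun x y => ?_
    rw [dist_eq_norm, dist_eq_norm, ← sub_mul, ← mul_sub, norm_mul, norm_mul, hu]
    simp [← ofReal_sub, abs_sub_comm]
  have h₁ : LipschitzWith (‖r‖₊ * ‖β‖₊) fun x : ℝ => r * exp ((β * x : ℝ) * I) * u := by
    refine LipschitzWith.of_dist_le_mul fun x y => ?_
    have hexp : dist (exp ((β * x : ℝ) * I)) (exp ((β * y : ℝ) * I)) ≤ dist (β * x) (β * y) := by
      simpa [circleMap] using (lipschitzWith_circleMap 0 1).dist_le_mul (β * x) (β * y)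
    rw [dist_eq_norm, ← sub_mul, ← mul_sub, norm_mul, norm_mul, hu, mul_one, ← dist_eq_norm]
    calc ‖(r : ℂ)‖ * dist _ _ ≤ |r| * dist (β * x) (β * y) := by
          rw [norm_real, Real.norm_eq_abs]
          exact mul_le_mul_of_nonneg_left hexp (abs_nonneg r)
      _ = _ := by simp [Real.dist_eq, ← mul_sub, abs_mul, mul_assoc]
  have h₂ : LipschitzWith ‖rb - r‖₊ fun x : ℝ => (rb - r) * (x : ℂ) * exp (β * I) * u := by
    refine LipschitzWith.of_dist_le_mul fun x y => ?_
    rw [dist_eq_norm, dist_eq_norm, ← sub_mul, ← sub_mul, ← mul_sub, norm_mul, norm_mul, hu,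
      norm_exp_ofReal_mul_I]
    simp [← ofReal_sub]
  have hK : ((‖ra - r‖₊ + ‖r‖₊ * ‖β‖₊ + ‖rb - r‖₊ : NNReal) : ENNReal)
      = ENNReal.ofReal (|ra - r| + |r| * |β| + |rb - r|) := by
    rw [← ENNReal.ofReal_coe_nnreal]
    push_cast
    simp only [Real.norm_eq_abs]
  rw [hsum, ← hK, ENNReal.coe_add, ENNReal.coe_add]
  refine (eVariationOn_add_le _ _ _).trans
    (add_le_add ((eVariationOn_add_le _ _ _).trans (add_le_add ?_ ?_)) ?_)
  · exact h₀.eVariationOn_comp_ramp_le le_rfl (by norm_num)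
  · exact h₁.eVariationOn_comp_ramp_le zero_le_one (by norm_num)
  · exact h₂.eVariationOn_comp_ramp_le zero_le_two le_rfl

end Detour

section LengthEstimate

open Real

theorem radial_add_arc_sq_le {d r x : ℝ} (hd : 0 ≤ d) (hr : 0 ≤ r) (hx : 0 ≤ x)
    (hxπ : x ≤ π / 2) :
    (d + 2 * r * x) ^ 2 ≤ (π / 2) ^ 2 * (d ^ 2 + 4 * r * (r + d) * sin x ^ 2) := by
  have hπ : 9.8596 < π ^ 2 := by nlinarith [pi_gt_d2]
  have hA : 0 ≤ π ^ 2 / 4 - 1 := by linarith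
  have hjordan : 2 * x ≤ π * sin x := by
    have := mul_le_sin hx hxπ
    rw [div_mul_eq_mul_div, div_le_iff₀ pi_pos] at this
    linarith
  have hC : 4 * x ^ 2 ≤ π ^ 2 * sin x ^ 2 := by nlinarith
  have hdr : 0 ≤ d * r := mul_nonneg hd hr
  have hgap : (π / 2) ^ 2 * (d ^ 2 + 4 * r * (r + d) * sin x ^ 2) - (d + 2 * r * x) ^ 2
      = (π ^ 2 / 4 - 1) * d ^ 2 + (π ^ 2 * sin x ^ 2 - 4 * x) * (d * r)
        + (π ^ 2 * sin x ^ 2 - 4 * x ^ 2) * r ^ 2 := by ring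
  rcases le_total 1 x with h1 | h1
  · have hB : 4 * x ≤ π ^ 2 * sin x ^ 2 := by nlinarith
    nlinarith [mul_nonneg hA (sq_nonneg d), mul_nonneg (sub_nonneg.2 hB) hdr,
      mul_nonneg (sub_nonneg.2 hC) (sq_nonneg r)]
  · -- the cross coefficient is at least `-4x`, and for `x ≤ 1` the discriminant is then nonpositive
    have hsin : 5 / 6 * x ≤ sin x := by nlinarith [sin_ge_sub_cube hx]
    have hC' : (25 / 36 * π ^ 2 - 4) * x ^ 2 ≤ π ^ 2 * sin x ^ 2 - 4 * x ^ 2 := by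
      nlinarith [mul_le_mul_of_nonneg_left (pow_le_pow_left₀ (by positivity) hsin 2)
        (sq_nonneg π)]
    have hAC : 4 * x ^ 2 ≤ (π ^ 2 / 4 - 1) * (π ^ 2 * sin x ^ 2 - 4 * x ^ 2) := by
      nlinarith [mul_le_mul_of_nonneg_left hC' hA, sq_nonneg x]
    have hcross : -(4 * x) * (d * r) ≤ (π ^ 2 * sin x ^ 2 - 4 * x) * (d * r) :=
      mul_le_mul_of_nonneg_right (by nlinarith [sq_nonneg (sin x)]) hdr
    nlinarith [sq_nonneg (2 * (π ^ 2 / 4 - 1) * d - 4 * x * r),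
      mul_nonneg (sub_nonneg.2 hAC) (sq_nonneg r)]

theorem norm_sub_mul_exp_sq (ra rb β : ℝ) :
    ‖(ra : ℂ) - rb * Complex.exp (β * Complex.I)‖ ^ 2
      = (ra - rb) ^ 2 + 4 * ra * rb * sin (β / 2) ^ 2 := by
  have hcos : cos β = 1 - 2 * sin (β / 2) ^ 2 := by
    conv_lhs => rw [← mul_div_cancel₀ β two_ne_zero, cos_two_mul', cos_sq']
    ring
  rw [Complex.exp_mul_I, ← Complex.ofReal_cos, ← Complex.ofReal_sin, Complex.sq_norm,
    show (ra : ℂ) - rb * (cos β + sin β * Complex.I)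
      = (ra - rb * cos β : ℝ) + (-(rb * sin β) : ℝ) * Complex.I by push_cast; ring,
    Complex.normSq_add_mul_I]
  linear_combination (rb ^ 2) * sin_sq_add_cos_sq β - 2 * ra * rb * hcos

theorem abs_sub_add_min_mul_le {ra rb β : ℝ} (ha : 0 ≤ ra) (hb : 0 ≤ rb) (hβ : |β| ≤ π) :
    |ra - rb| + min ra rb * |β| ≤ π / 2 * ‖(ra : ℂ) - rb * Complex.exp (β * Complex.I)‖ := by
  have hprod : ra * rb = min ra rb * (min ra rb + |ra - rb|) := by
    rcases le_total ra rb with h | h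
    · rw [min_eq_left h, abs_of_nonpos (by linarith)]; ring
    · rw [min_eq_right h, abs_of_nonneg (by linarith)]; ring
  have hsin : sin (β / 2) ^ 2 = sin (|β| / 2) ^ 2 := by
    rcases abs_choice β with h | h <;> rw [h]
    rw [neg_div, sin_neg, neg_sq]
  have hkey := radial_add_arc_sq_le (abs_nonneg (ra - rb)) (le_min ha hb)
    (div_nonneg (abs_nonneg β) zero_le_two) (by linarith)
  rw [← pow_le_pow_iff_left₀ (by positivity) (by positivity) two_ne_zero, mul_pow,
    norm_sub_mul_exp_sq, ← sq_abs (ra - rb), mul_assoc 4, hprod, hsin]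
  linarith

theorem pathLength_detour_le {ra rb β : ℝ} {u : ℂ} (hu : ‖u‖ = 1) (ha : 0 ≤ ra) (hb : 0 ≤ rb)
    (hβ : |β| ≤ π) :
    pathLength (detour ra (min ra rb) rb β u)
      ≤ ENNReal.ofReal (π / 2 * ‖(ra : ℂ) - rb * Complex.exp (β * Complex.I)‖) := by
  have hlen : |ra - min ra rb| + |min ra rb| * |β| + |rb - min ra rb|
      = |ra - rb| + min ra rb * |β| := by
    rw [abs_of_nonneg (le_min ha hb)]
    rcases le_total ra rb with h | h
    · rw [min_eq_left h, sub_self, abs_zero, abs_sub_comm rb ra]; ring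
    · rw [min_eq_right h, sub_self, abs_zero]; ring
  refine (eVariationOn_detour_le hu).trans (ENNReal.ofReal_le_ofReal ?_)
  rw [hlen]
  exact abs_sub_add_min_mul_le ha hb hβ

end LengthEstimate

theorem exists_eq_norm_mul_and_eq_norm_mul_exp_mul {a : ℂ} (ha : a ≠ 0) (b : ℂ) :
    ∃ u : ℂ, ∃ β : ℝ, ‖u‖ = 1 ∧ |β| ≤ Real.pi ∧
      a = ‖a‖ * u ∧ b = ‖b‖ * Complex.exp (β * Complex.I) * u := by
  have hna : (‖a‖ : ℂ) ≠ 0 := Complex.ofReal_ne_zero.2 (norm_ne_zero_iff.2 ha)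
  refine ⟨a / ‖a‖, (b / a).arg, by simp [ha], Complex.abs_arg_le_pi _,
    (mul_div_cancel₀ _ hna).symm, ?_⟩
  have h := Complex.norm_mul_exp_arg_mul_I (b / a)
  rw [norm_div] at h
  calc b = b / a * a := (div_mul_cancel₀ b ha).symm
    _ = _ := by
      conv_lhs => rw [← h]
      push_cast
      ring

theorem annulus_path_bound_general (R R' : ℝ) (hR : 0 < R) (a b : ℂ)
    (haR : R ≤ ‖a‖) (haR' : ‖a‖ ≤ R')
    (hbR : R ≤ ‖b‖) (hbR' : ‖b‖ ≤ R') :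
    ∃ γ : ℝ → ℂ, PiecewiseC1On γ ∧ γ 0 = a ∧ γ 1 = b ∧
      (∀ t ∈ Set.Icc (0 : ℝ) 1, R ≤ ‖γ t‖ ∧ ‖γ t‖ ≤ R') ∧
      pathLength γ ≤ ENNReal.ofReal (Real.pi / 2 * ‖a - b‖) := by
  obtain ⟨u, β, hu, hβ, ha, hb⟩ :=
    exists_eq_norm_mul_and_eq_norm_mul_exp_mul (norm_pos_iff.1 (hR.trans_le haR)) b
  have hab : ‖a - b‖ = ‖(‖a‖ : ℂ) - ‖b‖ * Complex.exp (β * Complex.I)‖ := by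
    conv_lhs => rw [ha, hb]
    rw [← sub_mul, norm_mul, hu, mul_one]
  have hmin : min ‖a‖ ‖b‖ ∈ Icc R R' := ⟨le_min haR hbR, (min_le_left _ _).trans haR'⟩
  refine ⟨detour ‖a‖ (min ‖a‖ ‖b‖) ‖b‖ β u,
    piecewiseC1On_of_contDiffOn_Icc three_ne_zero continuous_detour.continuousOn
      fun j _ => by simpa using (contDiffOn_detour_Icc j).of_le le_top,
    by rw [detour_zero, ← ha], by rw [detour_one, ← hb], fun t _ => ?_, ?_⟩
  · have hρ := detourRadius_mem_Icc ⟨haR, haR'⟩ hmin ⟨hbR, hbR'⟩ t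
    rw [norm_detour hu, abs_of_pos (hR.trans_le hρ.1)]
    exact hρ
  · rw [hab]
    exact pathLength_detour_le hu (norm_nonneg a) (norm_nonneg b) hβ

/-- for `0 < R ≤ R'` and `a, b ∈ ℂ` with `R ≤ |a|,|b| ≤ R'`, the
points `a` and `b` are joined by a piecewise C¹ path in the closed annulus
`{R ≤ |ζ| ≤ R'}` of length at most `(π/2)·|a-b|`. -/
theorem annulus_path_bound (R R' : ℝ) (hR : 0 < R) (hRR' : R ≤ R') (a b : ℂ)
    (haR : R ≤ ‖a‖) (haR' : ‖a‖ ≤ R')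
    (hbR : R ≤ ‖b‖) (hbR' : ‖b‖ ≤ R') :
    ∃ γ : ℝ → ℂ, PiecewiseC1On γ ∧ γ 0 = a ∧ γ 1 = b ∧
      (∀ t ∈ Set.Icc (0 : ℝ) 1, R ≤ ‖γ t‖ ∧ ‖γ t‖ ≤ R') ∧
      pathLength γ ≤ ENNReal.ofReal (Real.pi / 2 * ‖a - b‖) :=
  annulus_path_bound_general R R' hR a b haR haR' hbR hbR'
end

section
/- Let ε with 0 < 8ε ≤ 1, and let (T,ρ) be a standard bubble configuration of type ε: T ⊂ ℂ finite with 0 ∈ T, sup_{z∈T}|z| = ε, ρ : T → [0,∞) with ρ(z) ≤ 4ε for all z, and ρ(x)+ρ(y) ≤ (ε²/4)|x−y| for distinct x,y ∈ T. Let T' ⊂ T with 0 ∈ T' and retraction R : T → T' be such that distinct points of T' are at distance > (4ε³)^{|T'|−1} and d(R(x),x) ≤ (4ε³)^{|T'|} for all x ∈ T. Set k = |T'| and define ρ'(x) = (1/(4ε))·max{ε^{-1}(4ε³)^k, ρ(x)} for x ∈ T'. Then k ≥ 2, the closed discs {B²(x, ρ'(x))}_{x∈T'} are pairwise disjoint and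 contained in B²(2ε), and in fact for all distinct x, y ∈ T' one has 2ε|x−y| ≥ ρ'(x) + ρ'(y). -/
/-!
Write `A = 4ε³`, `k = |T'|` and `d = |x - y|` for distinct `x, y ∈ T'`. Since `d > A^(k-1)`, the
first term of the maximum defining `4ε·ρ'(x)` is `ε⁻¹A^k < 4ε²d`, and the separation of `(T,ρ)`
gives `ρ(x) ≤ ε²d/4`; hence `ρ'(x) ≤ εd`. As `ε ≤ 1/8` this forces
disjointness, and, comparing with any other point of `T'`, `ρ'(x) ≤ 2ε² ≤ ε`, hence containment
in `B²(2ε)`. Finally `k ≥ 2` because a point of norm `ε` is retracted to a point of `T'` within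
distance `A^k < ε`, which cannot be `0`.
-/

open Metric

/-- The radius `ρ'(x)` of the reduced configuration, as a function of `r = ρ(x)`. -/
noncomputable def reducedRadius (ε : ℝ) (k : ℕ) (r : ℝ) : ℝ :=
  (1 / (4 * ε)) * max (ε⁻¹ * (4 * ε ^ 3) ^ k) r

lemma reducedRadius_le_mul {ε d r : ℝ} {k : ℕ} (hε : 0 < ε) (hk : k ≠ 0)
    (hd : (4 * ε ^ 3) ^ (k - 1) < d) (hr : r ≤ 4 * ε ^ 2 * d) :
    reducedRadius ε k r ≤ ε * d := by
  have hscale : ε⁻¹ * (4 * ε ^ 3) ^ k ≤ 4 * ε ^ 2 * d := by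
    rw [← Nat.sub_add_cancel (Nat.one_le_iff_ne_zero.2 hk), pow_succ]
    calc ε⁻¹ * ((4 * ε ^ 3) ^ (k - 1) * (4 * ε ^ 3)) ≤ ε⁻¹ * (d * (4 * ε ^ 3)) := by
          gcongr
      _ = 4 * ε ^ 2 * d := by field_simp
  calc reducedRadius ε k r ≤ (1 / (4 * ε)) * (4 * ε ^ 2 * d) := by
        unfold reducedRadius
        gcongr
        exact max_le hscale hr
    _ = ε * d := by field_simp

lemma two_le_card_of_norm_sub_lt_norm {E : Type*} [SeminormedAddCommGroup E] {s : Finset E}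
    (h0 : (0 : E) ∈ s) {z w : E} (hw : w ∈ s) (hzw : ‖z - w‖ < ‖z‖) : 2 ≤ s.card := by
  have hw0 : w ≠ 0 := by
    rintro rfl
    simp at hzw
  exact Finset.one_lt_card.2 ⟨0, h0, w, hw, hw0.symm⟩

lemma closedBall_disjoint_closedBall_of_add_le_mul {E : Type*} [MetricSpace E] {x y : E}
    {r s c : ℝ} (hxy : x ≠ y) (hc : c < 1) (h : r + s ≤ c * dist x y) :
    Disjoint (closedBall x r) (closedBall y s) := by
  apply closedBall_disjoint_closedBall
  nlinarith [dist_pos.2 hxy]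

lemma closedBall_subset_closedBall_zero_of_le_mul {E : Type*} [SeminormedAddCommGroup E]
    {x y : E} {ε r : ℝ} (hε : 0 < ε) (hε1 : 2 * ε ≤ 1) (hx : ‖x‖ ≤ ε) (hy : ‖y‖ ≤ ε)
    (hr : r ≤ ε * ‖x - y‖) : closedBall x r ⊆ closedBall 0 (2 * ε) := by
  apply closedBall_subset_closedBall'
  have hxy : ‖x - y‖ ≤ 2 * ε := by linarith [norm_sub_le x y]
  rw [dist_zero_right]
  nlinarith [mul_le_mul_of_nonneg_left hxy hε.le]

theorem bubble_reduce_separation_general (ε : ℝ) (hε0 : 0 < ε) (hε1 : 8 * ε ≤ 1)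
    (T : Finset ℂ) (ρ : ℂ → ℝ)
    (hTle : ∀ z ∈ T, ‖z‖ ≤ ε)
    (hTsup : ∃ z ∈ T, ‖z‖ = ε)
    (hρ0 : ∀ z ∈ T, 0 ≤ ρ z)
    (hsep : ∀ x ∈ T, ∀ y ∈ T, x ≠ y → ρ x + ρ y ≤ ε ^ 2 / 4 * ‖x - y‖)
    (T' : Finset ℂ) (hT'sub : T' ⊆ T) (hT'0 : (0 : ℂ) ∈ T')
    (R : ℂ → ℂ) (hRmem : ∀ x ∈ T, R x ∈ T')
    (hT'sep : ∀ x ∈ T', ∀ y ∈ T', x ≠ y →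
      (4 * ε ^ 3) ^ (T'.card - 1) < ‖x - y‖)
    (hRclose : ∀ x ∈ T, ‖x - R x‖ ≤ (4 * ε ^ 3) ^ T'.card) :
    let k := T'.card
    let ρ' : ℂ → ℝ := fun x => (1 / (4 * ε)) * max (ε⁻¹ * (4 * ε ^ 3) ^ k) (ρ x)
    2 ≤ k ∧
    (∀ x ∈ T', ∀ y ∈ T', x ≠ y →
      Disjoint (Metric.closedBall x (ρ' x)) (Metric.closedBall y (ρ' y))) ∧
    (∀ x ∈ T', Metric.closedBall x (ρ' x) ⊆ Metric.closedBall (0 : ℂ) (2 * ε)) ∧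
    (∀ x ∈ T', ∀ y ∈ T', x ≠ y → ρ' x + ρ' y ≤ 2 * ε * ‖x - y‖) := by
  intro k ρ'
  have hk : k ≠ 0 := (Finset.card_pos.2 ⟨0, hT'0⟩).ne'
  have hA : 4 * ε ^ 3 < ε := by nlinarith [mul_pos hε0 hε0]
  have hk2 : 2 ≤ k := by
    obtain ⟨z, hzT, hz⟩ := hTsup
    refine two_le_card_of_norm_sub_lt_norm (z := z) hT'0 (hRmem z hzT) ?_
    calc ‖z - R z‖ ≤ (4 * ε ^ 3) ^ k := hRclose z hzT
      _ ≤ 4 * ε ^ 3 := pow_le_of_le_one (by positivity) (by nlinarith) hk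
      _ < ‖z‖ := by rwa [hz]
  have hρ' : ∀ x ∈ T', ∀ y ∈ T', x ≠ y → ρ' x ≤ ε * ‖x - y‖ := by
    intro x hx y hy hxy
    refine reducedRadius_le_mul hε0 hk (hT'sep x hx y hy hxy) ?_
    have := hsep x (hT'sub hx) y (hT'sub hy) hxy
    nlinarith [hρ0 y (hT'sub hy), norm_nonneg (x - y)]
  have hsum : ∀ x ∈ T', ∀ y ∈ T', x ≠ y → ρ' x + ρ' y ≤ 2 * ε * ‖x - y‖ := by
    intro x hx y hy hxy
    have hyx := hρ' y hy x hx hxy.symm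
    rw [norm_sub_rev] at hyx
    linarith [hρ' x hx y hy hxy]
  refine ⟨hk2, ?_, ?_, hsum⟩
  · intro x hx y hy hxy
    refine closedBall_disjoint_closedBall_of_add_le_mul hxy (by linarith : 2 * ε < 1) ?_
    simpa only [dist_eq_norm] using hsum x hx y hy hxy
  · intro x hx
    obtain ⟨y, hy, hyx⟩ := Finset.exists_mem_ne hk2 x
    exact closedBall_subset_closedBall_zero_of_le_mul hε0 (by linarith) (hTle x (hT'sub hx))
      (hTle y (hT'sub hy)) (hρ' x hx y hy hyx.symm)

/-- separation in the reduction of a standard bubble configuration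
`(T,ρ)` of type ε. With `T' ⊆ T`, the retraction `R`, `k = |T'|` and
`ρ'(x) = (1/(4ε))·max{ε⁻¹(4ε³)^k, ρ(x)}`, one has `k ≥ 2`, the closed discs
`B²(x,ρ'(x))`, `x ∈ T'`, are pairwise disjoint and contained in `B²(2ε)`, and
`2ε|x-y| ≥ ρ'(x) + ρ'(y)` for distinct `x, y ∈ T'`. -/
theorem bubble_reduce_separation (ε : ℝ) (hε0 : 0 < ε) (hε1 : 8 * ε ≤ 1)
    (T : Finset ℂ) (ρ : ℂ → ℝ)
    (hT0 : (0 : ℂ) ∈ T)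
    (hTle : ∀ z ∈ T, ‖z‖ ≤ ε)
    (hTsup : ∃ z ∈ T, ‖z‖ = ε)
    (hρ0 : ∀ z ∈ T, 0 ≤ ρ z)
    (hρ4 : ∀ z ∈ T, ρ z ≤ 4 * ε)
    (hsep : ∀ x ∈ T, ∀ y ∈ T, x ≠ y → ρ x + ρ y ≤ ε ^ 2 / 4 * ‖x - y‖)
    (T' : Finset ℂ) (hT'sub : T' ⊆ T) (hT'0 : (0 : ℂ) ∈ T')
    (R : ℂ → ℂ) (hRmem : ∀ x ∈ T, R x ∈ T') (hRid : ∀ x ∈ T', R x = x)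
    (hT'sep : ∀ x ∈ T', ∀ y ∈ T', x ≠ y →
      (4 * ε ^ 3) ^ (T'.card - 1) < ‖x - y‖)
    (hRclose : ∀ x ∈ T, ‖x - R x‖ ≤ (4 * ε ^ 3) ^ T'.card) :
    let k := T'.card
    let ρ' : ℂ → ℝ := fun x => (1 / (4 * ε)) * max (ε⁻¹ * (4 * ε ^ 3) ^ k) (ρ x)
    2 ≤ k ∧
    (∀ x ∈ T', ∀ y ∈ T', x ≠ y →
      Disjoint (Metric.closedBall x (ρ' x)) (Metric.closedBall y (ρ' y))) ∧
    (∀ x ∈ T', Metric.closedBall x (ρ' x) ⊆ Metric.closedBall (0 : ℂ) (2 * ε)) ∧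
    (∀ x ∈ T', ∀ y ∈ T', x ≠ y → ρ' x + ρ' y ≤ 2 * ε * ‖x - y‖) :=
  bubble_reduce_separation_general ε hε0 hε1 T ρ hTle hTsup hρ0 hsep T' hT'sub hT'0 R hRmem hT'sep
    hRclose
end

section
/- In the setting of the previous reduction lemma (standard bubble configuration (T,ρ) of type ε with 0 < 8ε ≤ 1, subset T' with retraction R as above, k = |T'|, and ρ'(x) = (1/(4ε))·max{ε^{-1}(4ε³)^k, ρ(x)}): for each z ∈ T one has |z − R(z)| ≤ 4ε²·ρ'(R(z)) and ρ(z) ≤ 4ε·ρ'(R(z)); moreover if z ≠ R(z) then ρ'(R(z)) = (1/(4ε²))·(4ε³)^k. Finally, for each x ∈ T' and any w ∈ B²(x, ρ'(x)), the minimum distance |w − T| = min_{u∈T}|w−u| is attained by a point of R^{-1}(x) = T ∩ B²(x, ρ'(x)). -/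
/-!
A point `z ∈ T` with `z ≠ R z` lies within `(4ε³)^k` of `R z`, so the bubble separation forces
both `ρ z` and `ρ (R z)` below `ε²/4 · (4ε³)^k`; in `ρ'` the maximum is then attained by the
floor term `ε⁻¹ (4ε³)^k`, which yields the first two claims. Conversely, two distinct points of
`T'` are more than `(4ε³)^(k-1)` apart, and this separation bounds `ρ'(x)` by `ε` times the
distance from `x` to any other point of `T'`. Since `R` moves points by at most `(4ε³)^k`, every
`u ∈ T` with `R u ≠ x` is then farther than `2ρ'(x)` from `x`. This identifies `R⁻¹(x)` with
`T ∩ B²(x, ρ'(x))` and shows that a nearest point of `T` to any `w ∈ B²(x, ρ'(x))` lies in it.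
-/

namespace BubbleReduction

variable {E : Type*} {ε : ℝ} {ρ : E → ℝ}

/-- The radius `ρ'` of the reduced configuration, `k` being the cardinality of `T'`. -/
noncomputable def reducedRadius (ε : ℝ) (k : ℕ) (ρ : E → ℝ) (x : E) : ℝ :=
  (1 / (4 * ε)) * max (ε⁻¹ * (4 * ε ^ 3) ^ k) (ρ x)

lemma reducedRadius_nonneg (hε0 : 0 < ε) (k : ℕ) (x : E) : 0 ≤ reducedRadius ε k ρ x := by
  unfold reducedRadius
  have : 0 ≤ ε⁻¹ * (4 * ε ^ 3) ^ k := by positivity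
  exact mul_nonneg (by positivity) (this.trans (le_max_left _ _))

lemma four_mul_mul_reducedRadius (hε0 : 0 < ε) (k : ℕ) (x : E) :
    4 * ε * reducedRadius ε k ρ x = max (ε⁻¹ * (4 * ε ^ 3) ^ k) (ρ x) := by
  unfold reducedRadius
  field_simp

lemma pow_le_four_mul_sq_mul_reducedRadius (hε0 : 0 < ε) (k : ℕ) (x : E) :
    (4 * ε ^ 3) ^ k ≤ 4 * ε ^ 2 * reducedRadius ε k ρ x := by
  have h := four_mul_mul_reducedRadius (ρ := ρ) hε0 k x
  have hmax := le_max_left (ε⁻¹ * (4 * ε ^ 3) ^ k) (ρ x)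
  calc (4 * ε ^ 3) ^ k = ε * (ε⁻¹ * (4 * ε ^ 3) ^ k) := by field_simp
    _ ≤ ε * (4 * ε * reducedRadius ε k ρ x) := by rw [h]; gcongr
    _ = 4 * ε ^ 2 * reducedRadius ε k ρ x := by ring

lemma pow_le_reducedRadius (hε0 : 0 < ε) (hε1 : 2 * ε ≤ 1) (k : ℕ) (x : E) :
    (4 * ε ^ 3) ^ k ≤ reducedRadius ε k ρ x := by
  have h := pow_le_four_mul_sq_mul_reducedRadius (ρ := ρ) hε0 k x
  have hr := reducedRadius_nonneg (ρ := ρ) hε0 k x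
  have hε2 : 4 * ε ^ 2 ≤ 1 := by nlinarith
  nlinarith [mul_le_mul_of_nonneg_right hε2 hr]

lemma reducedRadius_eq_of_le (hε0 : 0 < ε) {k : ℕ} {x : E}
    (hρx : ρ x ≤ ε⁻¹ * (4 * ε ^ 3) ^ k) :
    reducedRadius ε k ρ x = 1 / (4 * ε ^ 2) * (4 * ε ^ 3) ^ k := by
  unfold reducedRadius
  rw [max_eq_left hρx]
  field_simp

variable [SeminormedAddCommGroup E] {T T' : Finset E} {R : E → E}

lemma radius_le_of_norm_sub_le (hρ0 : ∀ z ∈ T, 0 ≤ ρ z)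
    (hsep : ∀ x ∈ T, ∀ y ∈ T, x ≠ y → ρ x + ρ y ≤ ε ^ 2 / 4 * ‖x - y‖)
    {x y : E} (hx : x ∈ T) (hy : y ∈ T) (hxy : x ≠ y) {δ : ℝ} (hδ : ‖x - y‖ ≤ δ) :
    ρ x ≤ ε ^ 2 / 4 * δ := by
  have := hsep x hx y hy hxy
  have := hρ0 y hy
  nlinarith [sq_nonneg ε]

lemma radius_le_inv_mul_pow_of_norm_sub_le (hε0 : 0 < ε) (hε1 : ε ≤ 1) (hρ0 : ∀ z ∈ T, 0 ≤ ρ z)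
    (hsep : ∀ x ∈ T, ∀ y ∈ T, x ≠ y → ρ x + ρ y ≤ ε ^ 2 / 4 * ‖x - y‖)
    {k : ℕ} {x y : E} (hx : x ∈ T) (hy : y ∈ T) (hxy : x ≠ y)
    (hδ : ‖x - y‖ ≤ (4 * ε ^ 3) ^ k) :
    ρ x ≤ ε⁻¹ * (4 * ε ^ 3) ^ k := by
  refine (radius_le_of_norm_sub_le hρ0 hsep hx hy hxy hδ).trans ?_
  gcongr
  calc ε ^ 2 / 4 = ε ^ 3 / 4 * ε⁻¹ := by field_simp
    _ ≤ 1 * ε⁻¹ := by gcongr; linarith [pow_le_one₀ hε0.le hε1 (n := 3)]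
    _ = ε⁻¹ := one_mul _

lemma pow_card_le_mul_norm_sub (hε0 : 0 ≤ ε)
    (hT'sep : ∀ x ∈ T', ∀ y ∈ T', x ≠ y → (4 * ε ^ 3) ^ (T'.card - 1) < ‖x - y‖)
    {x y : E} (hx : x ∈ T') (hy : y ∈ T') (hxy : x ≠ y) :
    (4 * ε ^ 3) ^ T'.card ≤ 4 * ε ^ 3 * ‖x - y‖ := by
  obtain ⟨n, hn⟩ := Nat.exists_eq_add_one_of_ne_zero (Finset.card_ne_zero_of_mem hx)
  have := hT'sep x hx y hy hxy
  rw [hn, Nat.add_sub_cancel] at this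
  rw [hn, pow_succ, mul_comm]
  gcongr

lemma reducedRadius_le_mul_norm_sub (hε0 : 0 < ε) (hρ0 : ∀ z ∈ T, 0 ≤ ρ z)
    (hsep : ∀ x ∈ T, ∀ y ∈ T, x ≠ y → ρ x + ρ y ≤ ε ^ 2 / 4 * ‖x - y‖) (hT'sub : T' ⊆ T)
    (hT'sep : ∀ x ∈ T', ∀ y ∈ T', x ≠ y → (4 * ε ^ 3) ^ (T'.card - 1) < ‖x - y‖)
    {x y : E} (hx : x ∈ T') (hy : y ∈ T') (hxy : x ≠ y) :
    reducedRadius ε T'.card ρ x ≤ ε * ‖x - y‖ := by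
  have hpow := pow_card_le_mul_norm_sub hε0.le hT'sep hx hy hxy
  have hρx := radius_le_of_norm_sub_le hρ0 hsep (hT'sub hx) (hT'sub hy) hxy le_rfl
  have hmax : max (ε⁻¹ * (4 * ε ^ 3) ^ T'.card) (ρ x) ≤ 4 * ε * (ε * ‖x - y‖) := by
    refine max_le ?_ (hρx.trans (by nlinarith [norm_nonneg (x - y)]))
    calc ε⁻¹ * (4 * ε ^ 3) ^ T'.card ≤ ε⁻¹ * (4 * ε ^ 3 * ‖x - y‖) := by gcongr
      _ = 4 * ε * (ε * ‖x - y‖) := by field_simp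
  rw [← four_mul_mul_reducedRadius hε0] at hmax
  exact le_of_mul_le_mul_left hmax (by positivity)

lemma retract_eq_of_norm_sub_le (hε0 : 0 < ε) (hε1 : 4 * ε ≤ 1) (hρ0 : ∀ z ∈ T, 0 ≤ ρ z)
    (hsep : ∀ x ∈ T, ∀ y ∈ T, x ≠ y → ρ x + ρ y ≤ ε ^ 2 / 4 * ‖x - y‖) (hT'sub : T' ⊆ T)
    (hRmem : ∀ x ∈ T, R x ∈ T')
    (hT'sep : ∀ x ∈ T', ∀ y ∈ T', x ≠ y → (4 * ε ^ 3) ^ (T'.card - 1) < ‖x - y‖)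
    (hRclose : ∀ x ∈ T, ‖x - R x‖ ≤ (4 * ε ^ 3) ^ T'.card)
    {u x : E} (hu : u ∈ T) (hx : x ∈ T') (hux : ‖u - x‖ ≤ 2 * reducedRadius ε T'.card ρ x) :
    R u = x := by
  by_contra hne
  have hRu := hRmem u hu
  set D := ‖R u - x‖
  have hD : 0 < D := (pow_nonneg (by positivity) _).trans_lt (hT'sep _ hRu x hx hne)
  have hρ' := reducedRadius_le_mul_norm_sub hε0 hρ0 hsep hT'sub hT'sep hx hRu (Ne.symm hne)
  rw [norm_sub_rev] at hρ'
  have hmove := (hRclose u hu).trans (pow_card_le_mul_norm_sub hε0.le hT'sep hRu hx hne)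
  have htri : D ≤ ‖u - R u‖ + ‖u - x‖ := by
    simpa only [norm_sub_rev u (R u)] using norm_sub_le_norm_sub_add_norm_sub (R u) u x
  have hε2 : ε ^ 2 ≤ 1 / 16 := by nlinarith
  have hε3 : 4 * ε ^ 3 ≤ ε / 4 := by nlinarith [mul_le_mul_of_nonneg_left hε2 hε0.le]
  nlinarith [mul_le_mul_of_nonneg_right hε3 hD.le, mul_le_mul_of_nonneg_right hε1 hD.le]

end BubbleReduction

open BubbleReduction in
theorem bubble_reduce_properties_general (ε : ℝ) (hε0 : 0 < ε) (hε1 : 8 * ε ≤ 1)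
    (T : Finset ℂ) (ρ : ℂ → ℝ)
    (hρ0 : ∀ z ∈ T, 0 ≤ ρ z)
    (hsep : ∀ x ∈ T, ∀ y ∈ T, x ≠ y → ρ x + ρ y ≤ ε ^ 2 / 4 * ‖x - y‖)
    (T' : Finset ℂ) (hT'sub : T' ⊆ T)
    (R : ℂ → ℂ) (hRmem : ∀ x ∈ T, R x ∈ T')
    (hT'sep : ∀ x ∈ T', ∀ y ∈ T', x ≠ y →
      (4 * ε ^ 3) ^ (T'.card - 1) < ‖x - y‖)
    (hRclose : ∀ x ∈ T, ‖x - R x‖ ≤ (4 * ε ^ 3) ^ T'.card) :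
    let k := T'.card
    let ρ' : ℂ → ℝ := fun x => (1 / (4 * ε)) * max (ε⁻¹ * (4 * ε ^ 3) ^ k) (ρ x)
    (∀ z ∈ T, ‖z - R z‖ ≤ 4 * ε ^ 2 * ρ' (R z) ∧
      ρ z ≤ 4 * ε * ρ' (R z)) ∧
    (∀ z ∈ T, z ≠ R z → ρ' (R z) = (1 / (4 * ε ^ 2)) * (4 * ε ^ 3) ^ k) ∧
    (∀ x ∈ T', {u : ℂ | u ∈ T ∧ R u = x} =
      {u : ℂ | u ∈ T ∧ u ∈ Metric.closedBall x (ρ' x)}) ∧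
    (∀ x ∈ T', ∀ w ∈ Metric.closedBall x (ρ' x),
      ∃ u ∈ T, R u = x ∧ ∀ u' ∈ T, ‖w - u‖ ≤ ‖w - u'‖) := by
  intro k ρ'
  have hsmall : ∀ {x y}, x ∈ T → y ∈ T → x ≠ y → ‖x - y‖ ≤ (4 * ε ^ 3) ^ k →
      ρ x ≤ ε⁻¹ * (4 * ε ^ 3) ^ k :=
    radius_le_inv_mul_pow_of_norm_sub_le hε0 (by linarith) hρ0 hsep
  have hretract : ∀ u ∈ T, ∀ x ∈ T', ‖u - x‖ ≤ 2 * ρ' x → R u = x := fun u hu x hx =>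
    retract_eq_of_norm_sub_le hε0 (by linarith) hρ0 hsep hT'sub hRmem hT'sep hRclose hu hx
  have hρ'0 : ∀ x, 0 ≤ ρ' x := reducedRadius_nonneg hε0 k
  refine ⟨fun z hz => ⟨?_, ?_⟩, fun z hz hne => ?_, fun x hx => ?_, fun x hx w hw => ?_⟩
  · exact (hRclose z hz).trans (pow_le_four_mul_sq_mul_reducedRadius hε0 k (R z))
  · rw [show 4 * ε * ρ' (R z) = _ from four_mul_mul_reducedRadius hε0 k (R z)]
    by_cases hne : z = R z
    · exact hne ▸ le_max_right _ _
    · exact (hsmall hz (hT'sub (hRmem z hz)) hne (hRclose z hz)).trans (le_max_left _ _)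
  · exact reducedRadius_eq_of_le hε0
      (hsmall (hT'sub (hRmem z hz)) hz (Ne.symm hne) (norm_sub_rev z (R z) ▸ hRclose z hz))
  · ext u
    simp only [Set.mem_ofPred_eq, Metric.mem_closedBall, dist_eq_norm, and_congr_right_iff]
    refine fun hu => ⟨fun hRu => ?_, fun hux => hretract u hu x hx (by linarith [hρ'0 x])⟩
    subst hRu
    exact (hRclose u hu).trans (pow_le_reducedRadius hε0 (by linarith) k (R u))
  · rw [Metric.mem_closedBall, dist_eq_norm] at hw
    obtain ⟨u, hu, hmin⟩ := T.exists_min_image (fun u => ‖w - u‖) ⟨x, hT'sub hx⟩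
    refine ⟨u, hu, hretract u hu x hx ?_, hmin⟩
    calc ‖u - x‖ ≤ ‖w - u‖ + ‖w - x‖ := by
          simpa only [norm_sub_rev u w] using norm_sub_le_norm_sub_add_norm_sub u w x
      _ ≤ 2 * ρ' x := by linarith [hmin x (hT'sub hx)]

/-- further properties of the reduction of a standard bubble
configuration `(T,ρ)` of type ε: for `z ∈ T`, `|z - R(z)| ≤ 4ε²·ρ'(R(z))` and
`ρ(z) ≤ 4ε·ρ'(R(z))`; if `z ≠ R(z)` then `ρ'(R(z)) = (1/(4ε²))·(4ε³)^k`; and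
for `x ∈ T'`, `w ∈ B²(x,ρ'(x))` the minimum of `|w - ·|` over `T` is attained on
`R⁻¹(x)`, which equals `T ∩ B²(x,ρ'(x))`. -/
theorem bubble_reduce_properties (ε : ℝ) (hε0 : 0 < ε) (hε1 : 8 * ε ≤ 1)
    (T : Finset ℂ) (ρ : ℂ → ℝ)
    (hT0 : (0 : ℂ) ∈ T)
    (hTle : ∀ z ∈ T, ‖z‖ ≤ ε)
    (hTsup : ∃ z ∈ T, ‖z‖ = ε)
    (hρ0 : ∀ z ∈ T, 0 ≤ ρ z)
    (hρ4 : ∀ z ∈ T, ρ z ≤ 4 * ε)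
    (hsep : ∀ x ∈ T, ∀ y ∈ T, x ≠ y → ρ x + ρ y ≤ ε ^ 2 / 4 * ‖x - y‖)
    (T' : Finset ℂ) (hT'sub : T' ⊆ T) (hT'0 : (0 : ℂ) ∈ T')
    (R : ℂ → ℂ) (hRmem : ∀ x ∈ T, R x ∈ T') (hRid : ∀ x ∈ T', R x = x)
    (hT'sep : ∀ x ∈ T', ∀ y ∈ T', x ≠ y →
      (4 * ε ^ 3) ^ (T'.card - 1) < ‖x - y‖)
    (hRclose : ∀ x ∈ T, ‖x - R x‖ ≤ (4 * ε ^ 3) ^ T'.card) :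
    let k := T'.card
    let ρ' : ℂ → ℝ := fun x => (1 / (4 * ε)) * max (ε⁻¹ * (4 * ε ^ 3) ^ k) (ρ x)
    (∀ z ∈ T, ‖z - R z‖ ≤ 4 * ε ^ 2 * ρ' (R z) ∧
      ρ z ≤ 4 * ε * ρ' (R z)) ∧
    (∀ z ∈ T, z ≠ R z → ρ' (R z) = (1 / (4 * ε ^ 2)) * (4 * ε ^ 3) ^ k) ∧
    (∀ x ∈ T', {u : ℂ | u ∈ T ∧ R u = x} =
      {u : ℂ | u ∈ T ∧ u ∈ Metric.closedBall x (ρ' x)}) ∧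
    (∀ x ∈ T', ∀ w ∈ Metric.closedBall x (ρ' x),
      ∃ u ∈ T, R u = x ∧ ∀ u' ∈ T, ‖w - u‖ ≤ ‖w - u'‖) :=
  bubble_reduce_properties_general ε hε0 hε1 T ρ hρ0 hsep T' hT'sub R hRmem hT'sep hRclose
end

section
/- Let T, Z, W be metric spaces, 𝔛 ⊂ T × Z a closed subset, and Λ ≥ 1. Let ℱ_Λ(𝔛/T, W) be the set of pairs (t, f) where t ∈ T and f : 𝔛_t → W is Λ-Lipschitz (with 𝔛_t = {z : (t,z) ∈ 𝔛}), metrized by d((t,f),(t',f')) = max{d(t,t'), d_H(Γ_f, Γ_{f'})}, where Γ_f ⊂ Z × W is the graph of f and Z × W carries the sup metric. Then for any δ > 0, ℱ_Λ(𝔛/T,W) can be covered by a family of subsets each of diameter < 4δ, with the number of subsets at most ν(T,δ)·(1 + ν(W,δ))^{ν(Z, δ/Λ)}. Consequently ν(ℱ, 4δ) ≤ ν(T,δ)·(1+ν(W,δ))^{ν(Z,δ/Λ)} for any subset ℱ ⊂ ℱ_Λ(𝔛/T,W). -/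
/-!
Encode `(t, f)` by the net point of `t` and, for each point `z` of a `δ/Λ`-net of `Z`, by
`none` if the fibre `𝔛_t` stays away from `z`, and otherwise by the net point of `W` closest
to `f ζ` for a chosen `ζ ∈ 𝔛_t` near `z`. Two pairs with the same code have parameters
`2δ`-close, and the Lipschitz bound puts every point of one graph within `2Λ·(δ/Λ) + 2δ = 4δ`
of the other graph; the inequality stays strict because a net at Hausdorff distance `< γ`
approximates every point within one fixed radius `ρ < γ`. There are at most `ν(T,δ)·(1 + ν(W,δ))^ν(Z,δ/Λ)` codes, and
one point of `G` in each code class is the required net.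
-/

open scoped ENNReal NNReal

/-- `Y` is a γ-net for `K`: a subset of `K` at Hausdorff distance `< γ` from `K`. -/
def IsNet {α : Type*} [MetricSpace α] (γ : ℝ) (K Y : Set α) : Prop :=
  Y ⊆ K ∧ EMetric.hausdorffEdist Y K < ENNReal.ofReal γ

/-- `nu K γ` : the minimal cardinality (in `ℕ∞`) of a γ-net for `K`. -/
noncomputable def nu {α : Type*} [MetricSpace α] (K : Set α) (γ : ℝ) : ℕ∞ :=
  ⨅ (Y : Set α) (_ : IsNet γ K Y), Y.encard

lemma exists_finset_approx_of_nu_le {α : Type*} [MetricSpace α] {γ : ℝ} {n : ℕ}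
    (h : nu (Set.univ : Set α) γ ≤ n) :
    ∃ ρ < γ, ∃ s : Finset α, s.card ≤ n ∧ ∃ π : α → s, ∀ x : α, dist x (π x) ≤ ρ := by
  obtain ⟨Y, hY, hcard⟩ : ∃ Y, IsNet γ Set.univ Y ∧ Y.encard < n + 1 := by
    simpa only [nu, iInf_lt_iff, exists_prop] using
      h.trans_lt (ENat.lt_add_one_iff (ENat.natCast_ne_top n) |>.2 le_rfl)
  have hY_fin : Y.Finite := Set.encard_lt_top_iff.1 (hcard.trans_le le_top)
  obtain ⟨ρ, hhρ, hργ⟩ := exists_between (ENNReal.toReal_lt_of_lt_ofReal hY.2)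
  have hnear : ∀ x, ∃ y ∈ hY_fin.toFinset, dist x y < ρ := by
    intro x
    have : Metric.infEDist x Y < ENNReal.ofReal ρ := calc
      Metric.infEDist x Y ≤ Metric.hausdorffEDist Y Set.univ := by
        rw [Metric.hausdorffEDist_comm]
        exact Metric.infEDist_le_hausdorffEDist_of_mem (Set.mem_univ x)
      _ < ENNReal.ofReal ρ := (ENNReal.lt_ofReal_iff_toReal_lt hY.2.ne_top).2 hhρ
    obtain ⟨y, hy, hxy⟩ := Metric.infEDist_lt_iff.1 this
    exact ⟨y, hY_fin.mem_toFinset.2 hy, edist_lt_ofReal.1 hxy⟩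
  choose π hπ hdist using hnear
  refine ⟨ρ, hργ, hY_fin.toFinset, ?_, fun x => ⟨π x, hπ x⟩, fun x => (hdist x).le⟩
  rw [← ENat.natCast_le_natCast, ← hY_fin.encard_eq_coe_toFinset_card]
  exact Order.le_of_lt_add_one hcard

section GraphCode

variable {Z W : Type*} [MetricSpace Z] {sW : Finset W}

open Classical in
noncomputable def graphCode (ρ : ℝ) (π : W → sW) (A : Set Z) (f : Z → W) (z : Z) : Option sW :=
  if h : ∃ ζ ∈ A, dist z ζ ≤ ρ then some (π (f h.choose)) else none

lemma exists_graphCode_eq_some {ρ : ℝ} (π : W → sW) {A : Set Z} (f : Z → W) {z ζ₀ : Z}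
    (hζ₀ : ζ₀ ∈ A) (hz : dist z ζ₀ ≤ ρ) :
    ∃ ζ ∈ A, dist z ζ ≤ ρ ∧ graphCode ρ π A f z = some (π (f ζ)) := by
  have h : ∃ ζ ∈ A, dist z ζ ≤ ρ := ⟨ζ₀, hζ₀, hz⟩
  exact ⟨h.choose, h.choose_spec.1, h.choose_spec.2, dif_pos h⟩

lemma exists_of_graphCode_eq_some {ρ : ℝ} {π : W → sW} {A : Set Z} {f : Z → W} {z : Z}
    {w : sW} (h : graphCode ρ π A f z = some w) : ∃ ζ ∈ A, dist z ζ ≤ ρ ∧ π (f ζ) = w := by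
  unfold graphCode at h
  split_ifs at h with hA
  exact ⟨hA.choose, hA.choose_spec.1, hA.choose_spec.2, Option.some_injective _ h⟩

variable [MetricSpace W] {sZ : Finset Z} {πZ : Z → sZ} {πW : W → sW} {Λ : ℝ≥0} {ρZ ρW : ℝ}

/- With `z` the net point near `a`, equal codes give a point `ζ' ∈ B` near `z` with
`πW (g ζ') = πW (f ζ)` for some `ζ ∈ A` near `z`; chain `f a → f ζ → πW (f ζ) → g ζ'`. -/
lemma exists_dist_le_of_graphCode_eq {A B : Set Z} {f g : Z → W}
    (hf : LipschitzOnWith Λ f A) (hΛ : 1 ≤ Λ) (hπZ : ∀ z : Z, dist z (πZ z) ≤ ρZ)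
    (hπW : ∀ w : W, dist w (πW w) ≤ ρW)
    (hcode : ∀ z : sZ, graphCode ρZ πW A f z = graphCode ρZ πW B g z)
    {x : Z × W} (hx : x ∈ A.graphOn f) :
    ∃ y ∈ B.graphOn g, dist x y ≤ 2 * Λ * ρZ + 2 * ρW := by
  obtain ⟨a, haA, rfl⟩ := hx
  set z := πZ a
  have haz : dist a z ≤ ρZ := hπZ a
  obtain ⟨ζ, hζA, hzζ, hcodeA⟩ :=
    exists_graphCode_eq_some πW f haA ((dist_comm _ _).trans_le haz)
  obtain ⟨ζ', hζ'B, hzζ', hπ⟩ := exists_of_graphCode_eq_some ((hcode z).symm.trans hcodeA)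
  refine ⟨(ζ', g ζ'), ⟨ζ', hζ'B, rfl⟩, ?_⟩
  have hρW : 0 ≤ ρW := dist_nonneg.trans (hπW (f a))
  have hΛρZ : ρZ ≤ Λ * ρZ := le_mul_of_one_le_left (dist_nonneg.trans haz) hΛ
  have hfirst : dist a ζ' ≤ 2 * ρZ := calc
    dist a ζ' ≤ dist a z + dist (z : Z) ζ' := dist_triangle _ _ _
    _ ≤ 2 * ρZ := by linarith
  have hsecond : dist (f a) (g ζ') ≤ 2 * Λ * ρZ + 2 * ρW := calc
    dist (f a) (g ζ')
        ≤ dist (f a) (f ζ) + dist (f ζ) (πW (f ζ)) + dist (πW (g ζ') : W) (g ζ') := by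
        rw [hπ]; exact dist_triangle4 _ _ _ _
    _ ≤ Λ * (dist a z + dist (z : Z) ζ) + ρW + ρW := by
        rw [dist_comm (πW (g ζ') : W)]
        gcongr
        · exact (hf.dist_le_mul a haA ζ hζA).trans (by gcongr; exact dist_triangle _ _ _)
        · exact hπW _
        · exact hπW _
    _ ≤ 2 * Λ * ρZ + 2 * ρW := by nlinarith [Λ.coe_nonneg]
  rw [Prod.dist_eq]
  exact max_le (by linarith) hsecond

lemma hausdorffEDist_graphOn_le_of_graphCode_eq {A B : Set Z} {f g : Z → W}
    (hf : LipschitzOnWith Λ f A) (hg : LipschitzOnWith Λ g B)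
    (hΛ : 1 ≤ Λ) (hπZ : ∀ z : Z, dist z (πZ z) ≤ ρZ)
    (hπW : ∀ w : W, dist w (πW w) ≤ ρW)
    (hcode : ∀ z : sZ, graphCode ρZ πW A f z = graphCode ρZ πW B g z) :
    Metric.hausdorffEDist (A.graphOn f) (B.graphOn g) ≤
      ENNReal.ofReal (2 * Λ * ρZ + 2 * ρW) := by
  refine Metric.hausdorffEDist_le_of_mem_edist (fun x hx => ?_) (fun x hx => ?_)
  · obtain ⟨y, hy, hxy⟩ := exists_dist_le_of_graphCode_eq hf hΛ hπZ hπW hcode hx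
    exact ⟨y, hy, edist_dist x y ▸ ENNReal.ofReal_le_ofReal hxy⟩
  · obtain ⟨y, hy, hxy⟩ :=
      exists_dist_le_of_graphCode_eq hg hΛ hπZ hπW (fun z => (hcode z).symm) hx
    exact ⟨y, hy, edist_dist x y ▸ ENNReal.ofReal_le_ofReal hxy⟩

end GraphCode

section Covering

variable {β : Type*}

lemma exists_finset_cover_of_code {γ : Type*} [Fintype γ] (F : Set β) (κ : β → γ)
    (R : β → β → Prop) (hR : ∀ p ∈ F, ∀ q ∈ F, κ p = κ q → R p q) :
    ∃ 𝒞 : Finset (Set β), (∀ p ∈ F, ∃ c ∈ 𝒞, p ∈ c) ∧ 𝒞.card ≤ Fintype.card γ ∧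
      ∀ c ∈ 𝒞, ∀ p ∈ c, ∀ q ∈ c, R p q := by
  classical
  refine ⟨Finset.univ.image fun a => {p | p ∈ F ∧ κ p = a}, fun p hp => ?_,
    Finset.card_image_le, ?_⟩
  · exact ⟨_, Finset.mem_image_of_mem _ (Finset.mem_univ (κ p)), hp, rfl⟩
  · simp only [Finset.mem_image, Finset.mem_univ, true_and]
    rintro _ ⟨a, rfl⟩ p ⟨hp, rfl⟩ q ⟨hq, hpq⟩
    exact hR p hp q hq hpq.symm

lemma exists_finset_net_of_cover {F G : Set β} (hG : G ⊆ F) (R : β → β → Prop)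
    (𝒞 : Finset (Set β)) (hcover : ∀ p ∈ F, ∃ c ∈ 𝒞, p ∈ c)
    (hR : ∀ c ∈ 𝒞, ∀ p ∈ c, ∀ q ∈ c, R p q) :
    ∃ N : Finset β, (N : Set β) ⊆ G ∧ N.card ≤ 𝒞.card ∧ ∀ p ∈ G, ∃ q ∈ N, R p q := by
  classical
  let 𝒞G := 𝒞.filter fun c => (c ∩ G).Nonempty
  let pick : 𝒞G → β := fun c => (Finset.mem_filter.1 c.2).2.some
  have hpick (c : 𝒞G) : pick c ∈ (c : Set β) ∩ G := (Finset.mem_filter.1 c.2).2.some_mem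
  refine ⟨Finset.univ.image pick, ?_, ?_, fun p hp => ?_⟩
  · intro _ hx
    obtain ⟨c, -, rfl⟩ := Finset.mem_image.1 hx
    exact (hpick c).2
  · exact Finset.card_image_le.trans ((Finset.card_univ.trans
      (Fintype.card_coe _)).le.trans (Finset.card_filter_le _ _))
  · obtain ⟨c, hc, hpc⟩ := hcover p (hG hp)
    let c' : 𝒞G := ⟨c, Finset.mem_filter.2 ⟨hc, p, hpc, hp⟩⟩
    exact ⟨pick c', Finset.mem_image_of_mem _ (Finset.mem_univ _),
      hR c hc p hpc _ (hpick c').1⟩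

end Covering

theorem lipschitz_family_covering_general (T Z W : Type*) [MetricSpace T] [MetricSpace Z]
    [MetricSpace W] (𝔛 : Set (T × Z))
    (Λ : NNReal) (hΛ : 1 ≤ Λ) (δ : ℝ) (hδ : 0 < δ) (nT nZ nW : ℕ)
    (hT : nu (Set.univ : Set T) δ ≤ (nT : ℕ∞))
    (hW : nu (Set.univ : Set W) δ ≤ (nW : ℕ∞))
    (hZ : nu (Set.univ : Set Z) (δ / (Λ : ℝ)) ≤ (nZ : ℕ∞)) :
    let Xt : T → Set Z := fun t => {z | (t, z) ∈ 𝔛}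
    let F : Set (T × (Z → W)) := {p | LipschitzOnWith Λ p.2 (Xt p.1)}
    let Γ : T × (Z → W) → Set (Z × W) := fun p => {q | q.1 ∈ Xt p.1 ∧ q.2 = p.2 q.1}
    let D : T × (Z → W) → T × (Z → W) → ENNReal := fun p q =>
      max (edist p.1 q.1) (EMetric.hausdorffEdist (Γ p) (Γ q))
    ∃ 𝒞 : Finset (Set (T × (Z → W))),
      (∀ p ∈ F, ∃ c ∈ 𝒞, p ∈ c) ∧
      𝒞.card ≤ nT * (1 + nW) ^ nZ ∧
      (∀ c ∈ 𝒞, ∀ p ∈ c, ∀ q ∈ c, D p q < ENNReal.ofReal (4 * δ)) ∧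
      ∀ G : Set (T × (Z → W)), G ⊆ F →
        ∃ N : Finset (T × (Z → W)), (↑N : Set (T × (Z → W))) ⊆ G ∧
          N.card ≤ nT * (1 + nW) ^ nZ ∧
          ∀ p ∈ G, ∃ q ∈ N, D p q < ENNReal.ofReal (4 * δ) := by
  classical
  intro Xt F Γ D
  obtain ⟨ρT, hρT, sT, hsT, πT, hπT⟩ := exists_finset_approx_of_nu_le hT
  obtain ⟨ρW, hρW, sW, hsW, πW, hπW⟩ := exists_finset_approx_of_nu_le hW
  obtain ⟨ρZ, hρZ, sZ, hsZ, πZ, hπZ⟩ := exists_finset_approx_of_nu_le hZ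
  let κ : T × (Z → W) → sT × (sZ → Option sW) :=
    fun p => (πT p.1, fun z => graphCode ρZ πW (Xt p.1) p.2 z)
  have hΓ (p : T × (Z → W)) : Γ p = (Xt p.1).graphOn p.2 := by ext; simp [Γ, eq_comm]
  have hsmall : ∀ p ∈ F, ∀ q ∈ F, κ p = κ q → D p q < ENNReal.ofReal (4 * δ) := by
    intro p hp q hq hpq
    obtain ⟨hπpq, hcode⟩ := Prod.mk.inj hpq
    have hΛρZ : (Λ : ℝ) * ρZ < δ := by
      rw [lt_div_iff₀ (by positivity)] at hρZ; linarith
    refine max_lt (edist_lt_ofReal.2 ?_) ?_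
    · linarith [dist_triangle_right p.1 q.1 (πT p.1), hπT p.1, hπT q.1, hπpq ▸ hπT q.1]
    · rw [hΓ, hΓ]
      refine (hausdorffEDist_graphOn_le_of_graphCode_eq hp hq hΛ hπZ hπW
        (congrFun hcode)).trans_lt ((ENNReal.ofReal_lt_ofReal_iff (by positivity)).2 ?_)
      linarith
  have hcard : Fintype.card (sT × (sZ → Option sW)) ≤ nT * (1 + nW) ^ nZ := by
    simp only [Fintype.card_prod, Fintype.card_fun, Fintype.card_option, Fintype.card_coe]
    calc sT.card * (sW.card + 1) ^ sZ.card ≤ nT * (1 + nW) ^ sZ.card :=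
          Nat.mul_le_mul hsT (Nat.pow_le_pow_left (by omega) _)
      _ ≤ nT * (1 + nW) ^ nZ := by gcongr; omega
  obtain ⟨𝒞, hcover, h𝒞, hdiam⟩ := exists_finset_cover_of_code F κ _ hsmall
  refine ⟨𝒞, hcover, h𝒞.trans hcard, hdiam, fun G hG => ?_⟩
  obtain ⟨N, hNG, hN, hnet⟩ := exists_finset_net_of_cover hG _ 𝒞 hcover hdiam
  exact ⟨N, hNG, hN.trans (h𝒞.trans hcard), hnet⟩

/-- Arzelà–Ascoli-type covering estimate for families of
Λ-Lipschitz maps on the fibres of a closed subset `𝔛 ⊆ T × Z`, metrized via the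
Hausdorff distance between graphs in `Z × W` (with the sup metric) together with
the distance of the parameters in `T`. Given nets of sizes `nT, nW, nZ` for
`T, W, Z` (at scales `δ, δ, δ/Λ`), the family is covered by at most
`nT·(1+nW)^{nZ}` sets of diameter `< 4δ`, and hence every subfamily `G` has a
`4δ`-net of at most that many elements. -/
theorem lipschitz_family_covering (T Z W : Type*) [MetricSpace T] [MetricSpace Z]
    [MetricSpace W] (𝔛 : Set (T × Z)) (hclosed : IsClosed 𝔛)
    (Λ : NNReal) (hΛ : 1 ≤ Λ) (δ : ℝ) (hδ : 0 < δ) (nT nZ nW : ℕ)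
    (hT : nu (Set.univ : Set T) δ ≤ (nT : ℕ∞))
    (hW : nu (Set.univ : Set W) δ ≤ (nW : ℕ∞))
    (hZ : nu (Set.univ : Set Z) (δ / (Λ : ℝ)) ≤ (nZ : ℕ∞)) :
    let Xt : T → Set Z := fun t => {z | (t, z) ∈ 𝔛}
    let F : Set (T × (Z → W)) := {p | LipschitzOnWith Λ p.2 (Xt p.1)}
    let Γ : T × (Z → W) → Set (Z × W) := fun p => {q | q.1 ∈ Xt p.1 ∧ q.2 = p.2 q.1}
    let D : T × (Z → W) → T × (Z → W) → ENNReal := fun p q =>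
      max (edist p.1 q.1) (EMetric.hausdorffEdist (Γ p) (Γ q))
    ∃ 𝒞 : Finset (Set (T × (Z → W))),
      (∀ p ∈ F, ∃ c ∈ 𝒞, p ∈ c) ∧
      𝒞.card ≤ nT * (1 + nW) ^ nZ ∧
      (∀ c ∈ 𝒞, ∀ p ∈ c, ∀ q ∈ c, D p q < ENNReal.ofReal (4 * δ)) ∧
      ∀ G : Set (T × (Z → W)), G ⊆ F →
        ∃ N : Finset (T × (Z → W)), (↑N : Set (T × (Z → W))) ⊆ G ∧
          N.card ≤ nT * (1 + nW) ^ nZ ∧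
          ∀ p ∈ G, ∃ q ∈ N, D p q < ENNReal.ofReal (4 * δ) :=
  lipschitz_family_covering_general T Z W 𝔛 Λ hΛ δ hδ nT nZ nW hT hW hZ
end
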